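/- arXiv:hep-th/0008071 — 5 statements merged into one kernel-verified Lean document; each statement's English description precedes it below -/
import Mathlib

section
/- Let k > 0 be real and let a, b, c, d, z be complex numbers with a + b = c + d. Suppose that for every integer l ≥ 1 none of the eight numbers kl+a−z, kl+b−z, kl+c−z, kl+d−z, kl+a+z, kl+b+z, kl+c+z, kl+d+z is a nonpositive integer. Then the infinite product over l = 1, 2, 3, … of the terms [Γ(kl+a−z)Γ(kl+b−z)Γ(kl+c+z)Γ(kl+d+z)] / [Γ(kl+c−z)Γ(kl+d−z)Γ(kl+a+z)Γ(kl+b+z)] converges (the family of factors is multipliable) to a nonzero complex number. -/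
/-!
Euler's limit formula writes `∏ᵢ Γ(x + uᵢ) / ∏ᵢ Γ(x + vᵢ)`, when `∑ uᵢ = ∑ vᵢ`, as the
infinite product over `j ≥ 0` of the rational factors `∏ᵢ (x + j + vᵢ) / ∏ᵢ (x + j + uᵢ)`.
For the quadruples `u = (a - z, b - z, c + z, d + z)` and `v = (c - z, d - z, a + z, b + z)`
the two quartic polynomials `∏ᵢ (w + vᵢ)` and `∏ᵢ (w + uᵢ)` always share their `w³`
coefficient, and when `a + b = c + d` also their `w²` coefficient, so each factor is
`1 + O((x + j)⁻³)`. Summing over `j`, the `l`-th Gamma ratio (at `x = k l`) is `1 + O(l⁻²)`,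
which is summable; a product of nonzero factors `1 + εₗ` with `∑ ‖εₗ‖ < ∞` converges to a
nonzero limit.
-/

open Complex Real Filter Topology

/-- The generic factor of the doubly reflected infinite Gamma product: the block of
four Gamma ratios together with the same block with `z` replaced by `-z`. -/
noncomputable def gammaFactor (k : ℝ) (a b c d z : ℂ) (l : ℕ) : ℂ :=
  (Complex.Gamma ((k : ℂ) * l + a - z) * Complex.Gamma ((k : ℂ) * l + b - z) *
   Complex.Gamma ((k : ℂ) * l + c + z) * Complex.Gamma ((k : ℂ) * l + d + z)) /
  (Complex.Gamma ((k : ℂ) * l + c - z) * Complex.Gamma ((k : ℂ) * l + d - z) *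
   Complex.Gamma ((k : ℂ) * l + a + z) * Complex.Gamma ((k : ℂ) * l + b + z))

lemma exp_sub_one_le_mul_exp (t : ℝ) : Real.exp t - 1 ≤ t * Real.exp t := by
  have h := mul_le_mul_of_nonneg_right (Real.one_sub_le_exp_neg t) (Real.exp_pos t).le
  rw [← Real.exp_add, neg_add_cancel, Real.exp_zero] at h
  linarith

lemma sum_range_one_div_add_pow_three_le {x : ℝ} (hx : 2 ≤ x) (n : ℕ) :
    ∑ j ∈ Finset.range n, 1 / (x + j) ^ 3 ≤ 2 / x ^ 2 := by
  have hx1 : 0 < x - 1 := by linarith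
  have hterm (j : ℕ) :
      1 / (x + j) ^ 3 ≤ (1 / (x - 1 + j) - 1 / (x - 1 + (j + 1 : ℕ))) / x := by
    have hj : (0 : ℝ) ≤ j := j.cast_nonneg
    have hpos : 0 < x - 1 + j := by linarith
    have htel : (1 / (x - 1 + j) - 1 / (x - 1 + (j + 1 : ℕ))) / x =
        1 / ((x - 1 + j) * (x + j) * x) := by
      push_cast
      field_simp
      ring
    rw [htel]
    gcongr
    calc (x - 1 + j) * (x + j) * x ≤ (x + j) * (x + j) * (x + j) := by gcongr <;> linarith
      _ = (x + j) ^ 3 := by ring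
  calc ∑ j ∈ Finset.range n, 1 / (x + j) ^ 3
      ≤ ∑ j ∈ Finset.range n, (1 / (x - 1 + j) - 1 / (x - 1 + (j + 1 : ℕ))) / x :=
        Finset.sum_le_sum fun j _ => hterm j
    _ = (1 / (x - 1) - 1 / (x - 1 + n)) / x := by
        rw [← Finset.sum_div, Finset.sum_range_sub' (fun j : ℕ => 1 / (x - 1 + j))]
        simp
    _ ≤ 1 / (x - 1) / x := by
        gcongr
        exact sub_le_self _ (by positivity)
    _ ≤ 2 / x ^ 2 := by
        rw [div_div, div_le_div_iff₀ (by positivity) (by positivity)]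
        nlinarith

lemma add_ne_neg_natCast_of_norm_lt {u : ℂ} {x : ℝ} (h : ‖u‖ < x) (m : ℕ) :
    (x : ℂ) + u ≠ -m := by
  intro heq
  have hre := congrArg Complex.re heq
  simp only [Complex.add_re, Complex.ofReal_re, Complex.neg_re, Complex.natCast_re] at hre
  have := (abs_le.mp (Complex.abs_re_le_norm u)).1
  linarith [(m.cast_nonneg : (0 : ℝ) ≤ m)]

lemma multipliable_and_tprod_ne_zero {R : Type*} [NormedCommRing R] [NormOneClass R]
    [NormMulClass R] [CompleteSpace R] {κ : Type*} {f : κ → R} (hf : ∀ i, f i ≠ 0)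
    (hs : Summable fun i => ‖f i - 1‖) : Multipliable f ∧ ∏' i, f i ≠ 0 := by
  have hf' : f = fun i => 1 + (f i - 1) := by simp
  rw [hf']
  exact ⟨multipliable_one_add_of_summable hs,
    tprod_one_add_ne_zero_of_summable (fun i => by simpa using hf i) hs⟩

section EulerFactor

variable {ι : Type*} [Fintype ι]

noncomputable def eulerFactor (u v : ι → ℂ) (w : ℂ) : ℂ := (∏ i, (w + v i)) / ∏ i, (w + u i)

lemma eulerFactor_const_add (u v : ι → ℂ) (x w : ℂ) :
    eulerFactor (fun i => x + u i) (fun i => x + v i) w = eulerFactor u v (x + w) := by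
  simp only [eulerFactor, add_assoc, add_left_comm w x]

lemma prod_GammaSeq (u : ι → ℂ) {n : ℕ} (hn : n ≠ 0) :
    ∏ i, Complex.GammaSeq (u i) n =
      (n : ℂ) ^ (∑ i, u i) * (n.factorial : ℂ) ^ Fintype.card ι /
        ∏ j ∈ Finset.range (n + 1), ∏ i, ((j : ℂ) + u i) := by
  have hn' : (n : ℂ) ≠ 0 := Nat.cast_ne_zero.mpr hn
  simp only [Complex.GammaSeq, Finset.prod_div_distrib, Finset.prod_mul_distrib,
    Finset.prod_const, Finset.card_univ, cpow_def_of_ne_zero hn', ← Complex.exp_sum,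
    Finset.mul_sum]
  rw [Finset.prod_comm]
  simp only [add_comm (Nat.cast _ : ℂ)]

lemma prod_GammaSeq_div_prod_GammaSeq {u v : ι → ℂ} (hsum : ∑ i, u i = ∑ i, v i)
    (hu : ∀ i (m : ℕ), u i ≠ -m) (hv : ∀ i (m : ℕ), v i ≠ -m) {n : ℕ} (hn : n ≠ 0) :
    (∏ i, Complex.GammaSeq (u i) n) / ∏ i, Complex.GammaSeq (v i) n =
      ∏ j ∈ Finset.range (n + 1), eulerFactor u v j := by
  have hprod_ne (w : ι → ℂ) (hw : ∀ i (m : ℕ), w i ≠ -m) :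
      ∏ j ∈ Finset.range (n + 1), ∏ i, ((j : ℂ) + w i) ≠ 0 :=
    Finset.prod_ne_zero_iff.mpr fun j _ => Finset.prod_ne_zero_iff.mpr fun i _ h =>
      hw i j (eq_neg_of_add_eq_zero_left (by rw [add_comm]; exact h))
  have hpow : (n : ℂ) ^ ∑ i, v i ≠ 0 := by simp [hn]
  have hfact : (n.factorial : ℂ) ≠ 0 := Nat.cast_ne_zero.mpr n.factorial_ne_zero
  rw [prod_GammaSeq u hn, prod_GammaSeq v hn, hsum]
  simp only [eulerFactor, Finset.prod_div_distrib]
  have := hprod_ne u hu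
  have := hprod_ne v hv
  field_simp

lemma tendsto_prod_eulerFactor {u v : ι → ℂ} (hsum : ∑ i, u i = ∑ i, v i)
    (hu : ∀ i (m : ℕ), u i ≠ -m) (hv : ∀ i (m : ℕ), v i ≠ -m) :
    Tendsto (fun n => ∏ j ∈ Finset.range (n + 1), eulerFactor u v j) atTop
      (𝓝 ((∏ i, Complex.Gamma (u i)) / ∏ i, Complex.Gamma (v i))) := by
  have hGamma (w : ι → ℂ) : Tendsto (fun n => ∏ i, Complex.GammaSeq (w i) n) atTop
      (𝓝 (∏ i, Complex.Gamma (w i))) :=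
    tendsto_finsetProd _ fun i _ => Complex.GammaSeq_tendsto_Gamma (w i)
  refine ((hGamma u).div (hGamma v) ?_).congr' ?_
  · exact Finset.prod_ne_zero_iff.mpr fun i _ => Complex.Gamma_ne_zero (hv i)
  · filter_upwards [eventually_ne_atTop 0] with n hn
    exact prod_GammaSeq_div_prod_GammaSeq hsum hu hv hn

lemma norm_prod_Gamma_div_prod_Gamma_sub_one_le {u v : ι → ℂ} (hsum : ∑ i, u i = ∑ i, v i)
    (hu : ∀ i (m : ℕ), u i ≠ -m) (hv : ∀ i (m : ℕ), v i ≠ -m) {x C : ℝ} (hx : 2 ≤ x)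
    (hC : 0 ≤ C) (hfactor : ∀ j : ℕ, ‖eulerFactor u v j - 1‖ ≤ C / (x + j) ^ 3) :
    ‖(∏ i, Complex.Gamma (u i)) / ∏ i, Complex.Gamma (v i) - 1‖ ≤
      2 * C * Real.exp C / x ^ 2 := by
  have hpartial (n : ℕ) :
      ‖∏ j ∈ Finset.range (n + 1), eulerFactor u v j - 1‖ ≤ 2 * C * Real.exp C / x ^ 2 := by
    set S := ∑ j ∈ Finset.range (n + 1), ‖eulerFactor u v j - 1‖
    have hS : S ≤ C * (2 / x ^ 2) := by
      calc S ≤ ∑ j ∈ Finset.range (n + 1), C * (1 / (x + j) ^ 3) :=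
            Finset.sum_le_sum fun j _ => (hfactor j).trans_eq (mul_one_div C _).symm
        _ ≤ C * (2 / x ^ 2) := by
            rw [← Finset.mul_sum]
            exact mul_le_mul_of_nonneg_left (sum_range_one_div_add_pow_three_le hx _) hC
    have hSC : S ≤ C := hS.trans (mul_le_of_le_one_right hC
      ((div_le_one (by positivity)).mpr (by nlinarith)))
    calc ‖∏ j ∈ Finset.range (n + 1), eulerFactor u v j - 1‖
        = ‖∏ j ∈ Finset.range (n + 1), (1 + (eulerFactor u v j - 1)) - 1‖ := by simp
      _ ≤ Real.exp S - 1 := Finset.norm_prod_one_add_sub_one_le _ _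
      _ ≤ S * Real.exp S := exp_sub_one_le_mul_exp S
      _ ≤ C * (2 / x ^ 2) * Real.exp C := by gcongr
      _ = 2 * C * Real.exp C / x ^ 2 := by ring
  exact le_of_tendsto (((tendsto_prod_eulerFactor hsum hu hv).sub_const 1).norm)
    (Eventually.of_forall hpartial)

lemma pow_card_le_norm_prod_add {u : ι → ℂ} {M w : ℝ} (hu : ∀ i, ‖u i‖ ≤ M) (hw : 2 * M ≤ w)
    (hw0 : 0 ≤ w) : (w / 2) ^ Fintype.card ι ≤ ‖∏ i, ((w : ℂ) + u i)‖ := by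
  rw [norm_prod, ← Finset.card_univ, ← Finset.prod_const]
  refine Finset.prod_le_prod (fun _ _ => by positivity) fun i _ => ?_
  have := norm_sub_norm_le (w : ℂ) (-u i)
  rw [sub_neg_eq_add, norm_neg, Complex.norm_real, Real.norm_of_nonneg hw0] at this
  linarith [hu i]

lemma norm_eulerFactor_sub_one_le {u : ι → ℂ} (v : ι → ℂ) {M w : ℝ} (hu : ∀ i, ‖u i‖ ≤ M)
    (hw : 2 * M ≤ w) (hw0 : 0 < w) :
    ‖eulerFactor u v w - 1‖ ≤
      ‖∏ i, ((w : ℂ) + v i) - ∏ i, ((w : ℂ) + u i)‖ / (w / 2) ^ Fintype.card ι := by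
  have hlow := pow_card_le_norm_prod_add hu hw hw0.le
  have hne : ∏ i, ((w : ℂ) + u i) ≠ 0 :=
    norm_pos_iff.mp (lt_of_lt_of_le (by positivity) hlow)
  rw [eulerFactor, div_sub_one hne, norm_div]
  gcongr

end EulerFactor

section GammaArgs

variable (a b c d z : ℂ)

noncomputable def gammaNumArgs : Fin 4 → ℂ := ![a - z, b - z, c + z, d + z]

noncomputable def gammaDenArgs : Fin 4 → ℂ := ![c - z, d - z, a + z, b + z]

lemma sum_gammaNumArgs : ∑ i, gammaNumArgs a b c d z i = ∑ i, gammaDenArgs a b c d z i := by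
  simp only [gammaNumArgs, gammaDenArgs, Fin.sum_univ_four, Matrix.cons_val]
  ring

variable {a b c d}

lemma prod_add_gammaDenArgs_sub_prod_add_gammaNumArgs (habcd : a + b = c + d) (w : ℂ) :
    ∏ i, (w + gammaDenArgs a b c d z i) - ∏ i, (w + gammaNumArgs a b c d z i) =
      4 * z * (c * d - a * b) * w +
        (∏ i, gammaDenArgs a b c d z i - ∏ i, gammaNumArgs a b c d z i) := by
  obtain rfl : d = a + b - c := by linear_combination -habcd
  simp only [gammaNumArgs, gammaDenArgs, Fin.prod_univ_four, Matrix.cons_val]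
  ring

lemma norm_eulerFactor_gammaArgs_sub_one_le (habcd : a + b = c + d) {M w : ℝ}
    (hM : ∀ i, ‖gammaNumArgs a b c d z i‖ ≤ M) (hw : 2 * M ≤ w) (hw1 : 1 ≤ w) :
    ‖eulerFactor (gammaNumArgs a b c d z) (gammaDenArgs a b c d z) w - 1‖ ≤
      16 * (‖4 * z * (c * d - a * b)‖ +
        ‖∏ i, gammaDenArgs a b c d z i - ∏ i, gammaNumArgs a b c d z i‖) / w ^ 3 := by
  set α := 4 * z * (c * d - a * b)
  set β := ∏ i, gammaDenArgs a b c d z i - ∏ i, gammaNumArgs a b c d z i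
  have hw0 : 0 < w := by linarith
  have hdiff : ‖α * w + β‖ ≤ (‖α‖ + ‖β‖) * w := by
    refine (norm_add_le _ _).trans ?_
    rw [norm_mul, Complex.norm_real, Real.norm_of_nonneg hw0.le]
    nlinarith [norm_nonneg α, norm_nonneg β]
  calc _ ≤ ‖α * w + β‖ / (w / 2) ^ 4 := by
        simpa [prod_add_gammaDenArgs_sub_prod_add_gammaNumArgs z habcd] using
          norm_eulerFactor_sub_one_le (gammaDenArgs a b c d z) hM hw hw0
    _ ≤ (‖α‖ + ‖β‖) * w / (w / 2) ^ 4 := by gcongr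
    _ = 16 * (‖α‖ + ‖β‖) / w ^ 3 := by field_simp; ring

end GammaArgs

lemma gammaFactor_eq_prod_Gamma_div (k : ℝ) (a b c d z : ℂ) (l : ℕ) :
    gammaFactor k a b c d z l =
      (∏ i, Complex.Gamma (((k * l : ℝ) : ℂ) + gammaNumArgs a b c d z i)) /
        ∏ i, Complex.Gamma (((k * l : ℝ) : ℂ) + gammaDenArgs a b c d z i) := by
  simp only [gammaFactor, gammaNumArgs, gammaDenArgs, Fin.prod_univ_four, Matrix.cons_val,
    Complex.ofReal_mul, Complex.ofReal_natCast, add_sub_assoc, add_assoc]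

lemma gammaFactor_ne_zero {k : ℝ} {a b c d z : ℂ} {l : ℕ} (h : ∀ m : ℕ,
      ((k : ℂ) * l + a - z ≠ -(m : ℂ)) ∧ ((k : ℂ) * l + b - z ≠ -(m : ℂ)) ∧
      ((k : ℂ) * l + c - z ≠ -(m : ℂ)) ∧ ((k : ℂ) * l + d - z ≠ -(m : ℂ)) ∧
      ((k : ℂ) * l + a + z ≠ -(m : ℂ)) ∧ ((k : ℂ) * l + b + z ≠ -(m : ℂ)) ∧
      ((k : ℂ) * l + c + z ≠ -(m : ℂ)) ∧ ((k : ℂ) * l + d + z ≠ -(m : ℂ))) :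
    gammaFactor k a b c d z l ≠ 0 := by
  refine div_ne_zero (mul_ne_zero (mul_ne_zero (mul_ne_zero ?_ ?_) ?_) ?_)
    (mul_ne_zero (mul_ne_zero (mul_ne_zero ?_ ?_) ?_) ?_) <;>
  exact Complex.Gamma_ne_zero fun m => by have := h m; tauto

lemma eventually_norm_gammaFactor_sub_one_le {k : ℝ} (hk : 0 < k) {a b c d : ℂ}
    (habcd : a + b = c + d) (z : ℂ) :
    ∃ K, ∀ᶠ l : ℕ in atTop, ‖gammaFactor k a b c d z l - 1‖ ≤ K / (l : ℝ) ^ 2 := by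
  simp only [gammaFactor_eq_prod_Gamma_div]
  set u := gammaNumArgs a b c d z
  set v := gammaDenArgs a b c d z
  set M := ∑ i, ‖u i‖ + ∑ i, ‖v i‖
  set C := 16 * (‖4 * z * (c * d - a * b)‖ + ‖∏ i, v i - ∏ i, u i‖)
  have hM : 0 ≤ M := by positivity
  have hu (i : Fin 4) : ‖u i‖ ≤ M :=
    (Finset.single_le_sum (fun j _ => norm_nonneg (u j)) (Finset.mem_univ i)).trans
      (le_add_of_nonneg_right (by positivity))
  have hv (i : Fin 4) : ‖v i‖ ≤ M :=
    (Finset.single_le_sum (fun j _ => norm_nonneg (v j)) (Finset.mem_univ i)).trans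
      (le_add_of_nonneg_left (by positivity))
  refine ⟨2 * C * Real.exp C / k ^ 2, ?_⟩
  filter_upwards [(tendsto_natCast_atTop_atTop.const_mul_atTop hk).eventually_ge_atTop
    (2 * M + 2)] with l hl
  have hbound := norm_prod_Gamma_div_prod_Gamma_sub_one_le (x := k * l) (C := C)
    (u := fun i => ((k * l : ℝ) : ℂ) + u i) (v := fun i => ((k * l : ℝ) : ℂ) + v i)
    (by simp only [Finset.sum_add_distrib, sum_gammaNumArgs, u, v])
    (fun i => add_ne_neg_natCast_of_norm_lt (by linarith [hu i]))
    (fun i => add_ne_neg_natCast_of_norm_lt (by linarith [hv i]))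
    (show 2 ≤ k * l by linarith) (by positivity) fun j => by
      rw [eulerFactor_const_add]
      exact_mod_cast norm_eulerFactor_gammaArgs_sub_one_le (w := k * l + j) z habcd hu
        (by linarith [(j.cast_nonneg : (0 : ℝ) ≤ j)])
        (by linarith [(j.cast_nonneg : (0 : ℝ) ≤ j)])
  calc _ ≤ 2 * C * Real.exp C / (k * l) ^ 2 := hbound
    _ = 2 * C * Real.exp C / k ^ 2 / (l : ℝ) ^ 2 := by rw [mul_pow, div_div]

lemma summable_norm_gammaFactor_sub_one {k : ℝ} (hk : 0 < k) {a b c d : ℂ}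
    (habcd : a + b = c + d) (z : ℂ) :
    Summable fun l : ℕ => ‖gammaFactor k a b c d z l - 1‖ := by
  obtain ⟨K, hK⟩ := eventually_norm_gammaFactor_sub_one_le hk habcd z
  refine .of_norm_bounded_eventually_nat
    ((Real.summable_one_div_nat_pow.mpr one_lt_two).mul_left K) ?_
  filter_upwards [hK] with l hl
  rw [norm_norm, ← div_eq_mul_one_div]
  exact hl

/-- If `k > 0`, `a + b = c + d`, and none of the arguments of the Gamma functions
involved is a nonpositive integer, then the infinite product over `l = 1, 2, 3, …` of
`Γ(kl+a−z)Γ(kl+b−z)Γ(kl+c+z)Γ(kl+d+z) / (Γ(kl+c−z)Γ(kl+d−z)Γ(kl+a+z)Γ(kl+b+z))`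
converges (the family of factors is multipliable) to a nonzero complex number. -/
theorem stmt0 (k : ℝ) (hk : 0 < k) (a b c d z : ℂ) (habcd : a + b = c + d)
    (hreg : ∀ l : ℕ, 1 ≤ l → ∀ m : ℕ,
      ((k : ℂ) * l + a - z ≠ -(m : ℂ)) ∧ ((k : ℂ) * l + b - z ≠ -(m : ℂ)) ∧
      ((k : ℂ) * l + c - z ≠ -(m : ℂ)) ∧ ((k : ℂ) * l + d - z ≠ -(m : ℂ)) ∧
      ((k : ℂ) * l + a + z ≠ -(m : ℂ)) ∧ ((k : ℂ) * l + b + z ≠ -(m : ℂ)) ∧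
      ((k : ℂ) * l + c + z ≠ -(m : ℂ)) ∧ ((k : ℂ) * l + d + z ≠ -(m : ℂ))) :
    Multipliable (fun l : ℕ => gammaFactor k a b c d z (l + 1)) ∧
    (∏' l : ℕ, gammaFactor k a b c d z (l + 1)) ≠ 0 :=
  multipliable_and_tprod_ne_zero (fun l => gammaFactor_ne_zero (hreg (l + 1) l.succ_pos))
    ((summable_nat_add_iff 1).mpr (summable_norm_gammaFactor_sub_one hk habcd z))
end

section
/- Assume λ > 1, let n ≥ 1 be an integer, and assume (2n+1)π/2 < ξ < π(λ+1)/2, so that 0 < ν_n < ν_{n−1} < … < ν_0 < π/2. Then the meromorphic function a^1_n(u) has, in the open strip 0 < Re u < π/2, poles exactly at the points ν_0, ν_1, …, ν_n; the poles at ν_0 and ν_n are simple, the poles at ν_k for 1 ≤ k ≤ n−1 have order two, and a^1_n has no zeroes in this strip. -/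
open Complex Real Filter Topology

/-- For a real parameter `y`, the trigonometric block
`(y)_u := sin((u+πy)/2)/sin((u−πy)/2)`. -/
noncomputable def blk (y : ℝ) (u : ℂ) : ℂ :=
  Complex.sin ((u + (Real.pi * y : ℝ)) / 2) / Complex.sin ((u - (Real.pi * y : ℝ)) / 2)

/-- The factor `a^1_n(u)` of the excited boundary reflection amplitudes. -/
noncomputable def a1 (lam ξ : ℝ) (n : ℕ) (u : ℂ) : ℂ :=
  ∏ x ∈ Finset.Icc 1 n,
    (blk (ξ / (lam * Real.pi) + 1 / (2 * lam) - (x : ℝ) / lam) u *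
     blk (ξ / (lam * Real.pi) - 1 / (2 * lam) - (x : ℝ) / lam) u) /
    (blk (ξ / (lam * Real.pi) + 1 / (2 * lam) - (x : ℝ) / lam + 1) u *
     blk (ξ / (lam * Real.pi) - 1 / (2 * lam) - (x : ℝ) / lam + 1) u)

/-- The candidate soliton boundary-binding rapidity `ν_n = ξ/λ − (2n+1)π/(2λ)`. -/
noncomputable def nuP (lam ξ : ℝ) (n : ℕ) : ℝ :=
  ξ / lam - (2 * (n : ℝ) + 1) * Real.pi / (2 * lam)

/-- `f` has a pole of order `m` at `p`. -/
def HasPoleOfOrder (f : ℂ → ℂ) (p : ℂ) (m : ℕ) : Prop :=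
  ∃ h : ℂ → ℂ, AnalyticAt ℂ h p ∧ h p ≠ 0 ∧
    ∀ᶠ u in 𝓝[≠] p, f u = h u / (u - p) ^ m

/-!
Write `c = π y`, so that `(y)_u = sin ((u + c) / 2) / sin ((u - c) / 2)`. The `x`-th factor of
`a^1_n` is then `(ν_{x-1})_u (ν_x)_u / ((ν_{x-1} + π)_u (ν_x + π)_u)` in these terms. In the strip
the four blocks are analytic and non-zero, except that the two numerator blocks have simple
poles at `ν_{x-1}` and `ν_x`. Pole orders add under multiplication, so the order of `a^1_n` at
`ν_k` is the number of factors in which `ν_k` occurs: one for `k = 0` and `k = n`, two in between.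
-/

namespace HasPoleOfOrder

variable {f g : ℂ → ℂ} {p : ℂ} {m l : ℕ}

lemma of_analyticAt (hf : AnalyticAt ℂ f p) (hf0 : f p ≠ 0) : HasPoleOfOrder f p 0 :=
  ⟨f, hf, hf0, Eventually.of_forall fun u => by rw [pow_zero, div_one]⟩

lemma mul (hf : HasPoleOfOrder f p m) (hg : HasPoleOfOrder g p l) :
    HasPoleOfOrder (f * g) p (m + l) := by
  obtain ⟨F, hF, hF0, hfF⟩ := hf
  obtain ⟨G, hG, hG0, hgG⟩ := hg
  refine ⟨F * G, hF.mul hG, mul_ne_zero hF0 hG0, ?_⟩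
  filter_upwards [hfF, hgG] with u hfu hgu
  rw [Pi.mul_apply, Pi.mul_apply, hfu, hgu, div_mul_div_comm, pow_add]

lemma div_analyticAt (hf : HasPoleOfOrder f p m) (hg : AnalyticAt ℂ g p) (hg0 : g p ≠ 0) :
    HasPoleOfOrder (f / g) p m := by
  obtain ⟨F, hF, hF0, hfF⟩ := hf
  refine ⟨F / g, hF.div hg hg0, div_ne_zero hF0 hg0, ?_⟩
  filter_upwards [hfF] with u hfu
  rw [Pi.div_apply, Pi.div_apply, hfu, div_right_comm]

lemma prod {ι : Type*} {s : Finset ι} {f : ι → ℂ → ℂ} {m : ι → ℕ}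
    (hf : ∀ i ∈ s, HasPoleOfOrder (f i) p (m i)) :
    HasPoleOfOrder (∏ i ∈ s, f i) p (∑ i ∈ s, m i) := by
  classical
  induction s using Finset.induction_on with
  | empty => simpa using of_analyticAt (f := 1) analyticAt_const one_ne_zero
  | insert i s hi ih =>
    rw [Finset.prod_insert hi, Finset.sum_insert hi]
    exact (hf i (Finset.mem_insert_self i s)).mul
      (ih fun j hj => hf j (Finset.mem_insert_of_mem hj))

end HasPoleOfOrder

lemma hasPoleOfOrder_one_div {f g : ℂ → ℂ} {p : ℂ} (hg : AnalyticAt ℂ g p) (hg0 : g p ≠ 0)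
    (hf : AnalyticAt ℂ f p) (hfp : f p = 0) (hf' : deriv f p ≠ 0) :
    HasPoleOfOrder (fun u => g u / f u) p 1 := by
  obtain ⟨q, hq⟩ := hf
  have hslope : AnalyticAt ℂ (dslope f p) p := ⟨_, hq.has_fpower_series_dslope_fslope⟩
  have hslope0 : dslope f p p ≠ 0 := by rwa [dslope_same]
  refine ⟨fun u => g u / dslope f p u, hg.div hslope hslope0, div_ne_zero hg0 hslope0, ?_⟩
  filter_upwards [self_mem_nhdsWithin] with u hu
  have hup : u - p ≠ 0 := sub_ne_zero.mpr hu
  rw [dslope_of_ne f hu, slope_def_field, hfp, sub_zero, pow_one, div_div_eq_mul_div,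
    div_div, mul_div_mul_right _ _ hup]

lemma ne_ofReal_of_re_ne {u : ℂ} {c : ℝ} (h : u.re ≠ c) : u ≠ c :=
  fun e => h (by rw [e, Complex.ofReal_re])

noncomputable def sinRatio (c : ℝ) (u : ℂ) : ℂ :=
  Complex.sin ((u + c) / 2) / Complex.sin ((u - c) / 2)

lemma blk_eq_sinRatio (y : ℝ) : blk y = sinRatio (π * y) := rfl

lemma sin_half_sub_ne_zero {u : ℂ} {c : ℝ} (hre : |u.re - c| < 2 * π) (hne : u ≠ c) :
    Complex.sin ((u - c) / 2) ≠ 0 := by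
  rw [Ne, Complex.sin_eq_zero_iff]
  rintro ⟨k, hk⟩
  have hu : u = c + 2 * k * π := by linear_combination 2 * hk
  have hre' : u.re - c = 2 * k * π := by rw [hu]; simp
  obtain ⟨hlt, hgt⟩ := abs_lt.mp (hre' ▸ hre)
  have hk0 : k = 0 := by
    have h1 : (k : ℝ) < 1 := by nlinarith [pi_pos]
    have h2 : -1 < (k : ℝ) := by nlinarith [pi_pos]
    norm_cast at h1 h2
    omega
  exact hne (by simpa [hk0] using hu)

lemma sinRatio_analyticAt_and_ne_zero {u : ℂ} (hu0 : 0 < u.re) (huπ : u.re < π / 2) {c : ℝ}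
    (hc0 : 0 < c) (hc : c < 3 * π / 2) (hne : u ≠ c) :
    AnalyticAt ℂ (sinRatio c) u ∧ sinRatio c u ≠ 0 := by
  have hden : Complex.sin ((u - c) / 2) ≠ 0 :=
    sin_half_sub_ne_zero (abs_lt.mpr ⟨by linarith, by linarith⟩) hne
  have hnum : Complex.sin ((u + c) / 2) ≠ 0 := by
    have hne' : u ≠ ((-c : ℝ) : ℂ) := ne_ofReal_of_re_ne (by linarith)
    simpa using sin_half_sub_ne_zero (abs_lt.mpr ⟨by linarith, by linarith⟩) hne'
  exact ⟨by unfold sinRatio; fun_prop (disch := exact hden), div_ne_zero hnum hden⟩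

lemma sinRatio_hasPoleOfOrder_one {c : ℝ} (hc : Real.sin c ≠ 0) :
    HasPoleOfOrder (sinRatio c) c 1 := by
  have hderiv : HasDerivAt (fun u : ℂ => Complex.sin ((u - c) / 2)) (1 / 2) c := by
    simpa using ((hasDerivAt_id (c : ℂ)).sub_const (c : ℂ)).div_const 2 |>.csin
  refine hasPoleOfOrder_one_div (by fun_prop) ?_ (by fun_prop) (by simp) ?_
  · rw [← two_mul, mul_div_cancel_left₀ _ two_ne_zero, ← Complex.ofReal_sin]
    exact_mod_cast hc
  · rw [hderiv.deriv]; norm_num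

lemma sinRatio_hasPoleOfOrder {p : ℂ} (hp0 : 0 < p.re) (hpπ : p.re < π / 2) {c : ℝ}
    (hc0 : 0 < c) (hc : c < 3 * π / 2) :
    HasPoleOfOrder (sinRatio c) p (if p = c then 1 else 0) := by
  split_ifs with hpc
  · subst hpc
    simp only [Complex.ofReal_re] at hp0 hpπ
    exact sinRatio_hasPoleOfOrder_one (sin_pos_of_pos_of_lt_pi hp0 (by linarith)).ne'
  · obtain ⟨han, hne⟩ := sinRatio_analyticAt_and_ne_zero hp0 hpπ hc0 hc hpc
    exact .of_analyticAt han hne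

noncomputable def bindingFactor (a b : ℝ) : ℂ → ℂ :=
  sinRatio a * sinRatio b / (sinRatio (a + π) * sinRatio (b + π))

lemma sinRatio_add_pi_analyticAt_and_ne_zero {u : ℂ} (hu0 : 0 < u.re) (huπ : u.re < π / 2)
    {c : ℝ} (hc0 : 0 < c) (hc : c < π / 2) :
    AnalyticAt ℂ (sinRatio (c + π)) u ∧ sinRatio (c + π) u ≠ 0 :=
  sinRatio_analyticAt_and_ne_zero hu0 huπ (by linarith) (by linarith)
    (ne_ofReal_of_re_ne (by linarith))

lemma bindingFactor_analyticAt_and_ne_zero {u : ℂ} (hu0 : 0 < u.re) (huπ : u.re < π / 2)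
    {a b : ℝ} (ha0 : 0 < a) (ha : a < π / 2) (hb0 : 0 < b) (hb : b < π / 2)
    (hua : u ≠ a) (hub : u ≠ b) :
    AnalyticAt ℂ (bindingFactor a b) u ∧ bindingFactor a b u ≠ 0 := by
  obtain ⟨hA, hA0⟩ := sinRatio_analyticAt_and_ne_zero hu0 huπ ha0 (by linarith) hua
  obtain ⟨hB, hB0⟩ := sinRatio_analyticAt_and_ne_zero hu0 huπ hb0 (by linarith) hub
  obtain ⟨hA', hA'0⟩ := sinRatio_add_pi_analyticAt_and_ne_zero hu0 huπ ha0 ha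
  obtain ⟨hB', hB'0⟩ := sinRatio_add_pi_analyticAt_and_ne_zero hu0 huπ hb0 hb
  exact ⟨(hA.mul hB).div (hA'.mul hB') (mul_ne_zero hA'0 hB'0),
    div_ne_zero (mul_ne_zero hA0 hB0) (mul_ne_zero hA'0 hB'0)⟩

lemma bindingFactor_hasPoleOfOrder {p : ℂ} (hp0 : 0 < p.re) (hpπ : p.re < π / 2)
    {a b : ℝ} (ha0 : 0 < a) (ha : a < π / 2) (hb0 : 0 < b) (hb : b < π / 2) :
    HasPoleOfOrder (bindingFactor a b) p
      ((if p = a then 1 else 0) + (if p = b then 1 else 0)) := by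
  obtain ⟨hA', hA'0⟩ := sinRatio_add_pi_analyticAt_and_ne_zero hp0 hpπ ha0 ha
  obtain ⟨hB', hB'0⟩ := sinRatio_add_pi_analyticAt_and_ne_zero hp0 hpπ hb0 hb
  exact ((sinRatio_hasPoleOfOrder hp0 hpπ ha0 (by linarith)).mul
    (sinRatio_hasPoleOfOrder hp0 hpπ hb0 (by linarith))).div_analyticAt
    (hA'.mul hB') (mul_ne_zero hA'0 hB'0)

section Rapidities

variable {lam ξ : ℝ}

lemma pi_mul_a1_param_add (hlam : lam ≠ 0) (j : ℕ) :
    π * (ξ / (lam * π) + 1 / (2 * lam) - ((1 + j : ℕ) : ℝ) / lam) = nuP lam ξ j := by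
  unfold nuP; push_cast; field_simp; ring

lemma pi_mul_a1_param_sub (hlam : lam ≠ 0) (j : ℕ) :
    π * (ξ / (lam * π) - 1 / (2 * lam) - ((1 + j : ℕ) : ℝ) / lam) = nuP lam ξ (j + 1) := by
  unfold nuP; push_cast; field_simp; ring

lemma a1_eq_prod_bindingFactor (hlam : lam ≠ 0) (n : ℕ) :
    a1 lam ξ n = ∏ j ∈ Finset.range n, bindingFactor (nuP lam ξ j) (nuP lam ξ (j + 1)) := by
  funext u
  rw [Finset.prod_apply, a1, ← Finset.Ico_add_one_right_eq_Icc, Finset.prod_Ico_eq_prod_range,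
    Nat.add_sub_cancel]
  refine Finset.prod_congr rfl fun j _ => ?_
  simp only [blk_eq_sinRatio, mul_add, mul_one, pi_mul_a1_param_add hlam,
    pi_mul_a1_param_sub hlam]
  rfl

lemma nuP_injective (hlam : lam ≠ 0) : Function.Injective (nuP lam ξ) := by
  intro i j h
  unfold nuP at h
  field_simp at h
  exact_mod_cast (mul_right_cancel₀ pi_ne_zero (by linarith : (i : ℝ) * π = j * π))

lemma nuP_pos (hlam : 0 < lam) {n j : ℕ} (hj : j ≤ n) (hlow : (2 * (n : ℝ) + 1) * π / 2 < ξ) :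
    0 < nuP lam ξ j := by
  have hjn : (j : ℝ) ≤ n := by exact_mod_cast hj
  have hξ : (2 * (j : ℝ) + 1) * π < 2 * ξ := by nlinarith [pi_pos]
  unfold nuP
  rw [sub_pos, div_lt_div_iff₀ (by positivity) hlam]
  nlinarith

lemma nuP_lt_pi_div_two (hlam : 0 < lam) (hhigh : ξ < π * (lam + 1) / 2) (j : ℕ) :
    nuP lam ξ j < π / 2 := by
  have : (0 : ℝ) ≤ j := j.cast_nonneg
  unfold nuP
  rw [sub_lt_iff_lt_add, div_lt_iff₀ hlam]
  field_simp
  nlinarith [pi_pos]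

end Rapidities

lemma sum_range_ite_eq_add_ite_succ_eq (n k : ℕ) :
    ∑ j ∈ Finset.range n, ((if k = j then 1 else 0) + (if k = j + 1 then 1 else 0)) =
      (if k < n then 1 else 0) + (if 1 ≤ k ∧ k ≤ n then 1 else 0) := by
  induction n with
  | zero =>
    rw [Finset.sum_range_zero]
    split_ifs <;> omega
  | succ n ih =>
    rw [Finset.sum_range_succ, ih]
    split_ifs <;> omega

section Amplitude

variable {lam ξ : ℝ} {n : ℕ}

lemma a1_analyticAt_and_ne_zero (hlam : 0 < lam) (hlow : (2 * (n : ℝ) + 1) * π / 2 < ξ)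
    (hhigh : ξ < π * (lam + 1) / 2) {u : ℂ} (hu0 : 0 < u.re) (huπ : u.re < π / 2)
    (hu : ∀ k ≤ n, u ≠ nuP lam ξ k) : AnalyticAt ℂ (a1 lam ξ n) u ∧ a1 lam ξ n u ≠ 0 := by
  have hfactor : ∀ j ∈ Finset.range n,
      AnalyticAt ℂ (bindingFactor (nuP lam ξ j) (nuP lam ξ (j + 1))) u ∧
        bindingFactor (nuP lam ξ j) (nuP lam ξ (j + 1)) u ≠ 0 := fun j hj => by
    have hjn : j + 1 ≤ n := Finset.mem_range.mp hj
    exact bindingFactor_analyticAt_and_ne_zero hu0 huπ (nuP_pos hlam (by omega) hlow)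
      (nuP_lt_pi_div_two hlam hhigh j) (nuP_pos hlam hjn hlow) (nuP_lt_pi_div_two hlam hhigh _)
      (hu j (by omega)) (hu (j + 1) hjn)
  rw [a1_eq_prod_bindingFactor hlam.ne', Finset.prod_apply]
  exact ⟨Finset.analyticAt_prod _ fun j hj => (hfactor j hj).1,
    Finset.prod_ne_zero_iff.mpr fun j hj => (hfactor j hj).2⟩

lemma a1_hasPoleOfOrder_nuP (hlam : 0 < lam) (hlow : (2 * (n : ℝ) + 1) * π / 2 < ξ)
    (hhigh : ξ < π * (lam + 1) / 2) {k : ℕ} (hk : k ≤ n) :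
    HasPoleOfOrder (a1 lam ξ n) (nuP lam ξ k)
      ((if k < n then 1 else 0) + (if 1 ≤ k ∧ k ≤ n then 1 else 0)) := by
  have hk0 := nuP_pos hlam hk hlow
  have hkπ := nuP_lt_pi_div_two hlam hhigh k
  have hprod := HasPoleOfOrder.prod fun j (hj : j ∈ Finset.range n) =>
    have hjn : j + 1 ≤ n := Finset.mem_range.mp hj
    bindingFactor_hasPoleOfOrder (p := nuP lam ξ k) (by simpa using hk0) (by simpa using hkπ)
      (nuP_pos hlam (by omega) hlow) (nuP_lt_pi_div_two hlam hhigh j)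
      (nuP_pos hlam hjn hlow) (nuP_lt_pi_div_two hlam hhigh _)
  simp only [Complex.ofReal_inj, (nuP_injective hlam.ne').eq_iff,
    sum_range_ite_eq_add_ite_succ_eq] at hprod
  rwa [a1_eq_prod_bindingFactor hlam.ne']

end Amplitude

/-- For `λ > 1`, `n ≥ 1` and `(2n+1)π/2 < ξ < π(λ+1)/2`, the function `a^1_n` has, in the
open strip `0 < Re u < π/2`, poles exactly at `ν_0, …, ν_n`; those at `ν_0` and `ν_n` are
simple, those at `ν_k` for `1 ≤ k ≤ n−1` are of order two, and `a^1_n` has no zeroes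
in the strip. -/
theorem stmt2 (lam ξ : ℝ) (hlam : 1 < lam) (n : ℕ) (hn : 1 ≤ n)
    (hlow : (2 * (n : ℝ) + 1) * Real.pi / 2 < ξ)
    (hhigh : ξ < Real.pi * (lam + 1) / 2) :
    (∀ u : ℂ, 0 < u.re → u.re < Real.pi / 2 →
        (∀ k : ℕ, k ≤ n → u ≠ (nuP lam ξ k : ℂ)) →
        AnalyticAt ℂ (a1 lam ξ n) u ∧ a1 lam ξ n u ≠ 0) ∧
    HasPoleOfOrder (a1 lam ξ n) ((nuP lam ξ 0 : ℝ) : ℂ) 1 ∧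
    HasPoleOfOrder (a1 lam ξ n) ((nuP lam ξ n : ℝ) : ℂ) 1 ∧
    (∀ k : ℕ, 1 ≤ k → k ≤ n - 1 →
        HasPoleOfOrder (a1 lam ξ n) ((nuP lam ξ k : ℝ) : ℂ) 2) := by
  have hlam0 : 0 < lam := by linarith
  have hpole := fun k (hk : k ≤ n) => a1_hasPoleOfOrder_nuP hlam0 hlow hhigh hk
  refine ⟨fun u hu0 huπ hu => a1_analyticAt_and_ne_zero hlam0 hlow hhigh hu0 huπ hu,
    ?_, ?_, fun k hk1 hk2 => ?_⟩
  · simpa [show 0 < n by omega] using hpole 0 n.zero_le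
  · simpa [hn] using hpole n le_rfl
  · simpa [show k < n by omega, hk1, show k ≤ n by omega] using hpole k (by omega)
end

section
/- Let n ≥ 1 and m ≥ n−1 be integers, and let F denote the Fibonacci sequence normalised by F(1) = F(2) = 1, F(x+2) = F(x+1) + F(x). Then the number of finite sequences (i_1, j_1, i_2, j_2, …, j_{k−1}, i_k) of odd length 2k−1 (k ≥ 1), with every i_t an integer in {0, 1, …, n−1}, every j_t an integer in {1, …, m}, and satisfying i_t < j_t and j_t ≤ i_{t+1} for all 1 ≤ t ≤ k−1, equals F(2n). -/
/-!
Shifting the `s`-th entries of a chain `i₀ < j₀ ≤ i₁ < j₁ ≤ ⋯ ≤ i_κ` up by `s` turns it into a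
strictly increasing sequence `i₀ < j₀ < i₁ + 1 < j₁ + 1 < ⋯ < i_κ + κ` of length `2κ + 1` in
`{0, …, n + κ - 1}`, and every such sequence arises this way (the bounds `1 ≤ j_t ≤ m` are automatic
once `m ≥ n - 1`). Hence there are `C(n + κ, 2κ + 1)` chains with `κ` entries `j`, and
`∑_κ C(n + κ, 2κ + 1) = F(2n)` is the diagonal-sum formula for Fibonacci numbers.
-/

open Finset

theorem Fin.val_le_val_of_strictMono {k N : ℕ} {f : Fin k → Fin N} (hf : StrictMono f)
    (t : Fin k) : (t : ℕ) ≤ f t := by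
  obtain ⟨t, ht⟩ := t
  induction t with
  | zero => exact Nat.zero_le _
  | succ t ih => exact (ih (by omega)).trans_lt (hf (Fin.mk_lt_mk.2 t.lt_succ_self))

theorem Nat.card_sigma_eq_sum_range {E : ℕ → Type*} [∀ κ, Finite (E κ)] (n : ℕ)
    (hE : ∀ κ, n ≤ κ → IsEmpty (E κ)) :
    Nat.card (Σ κ, E κ) = ∑ κ ∈ range n, Nat.card (E κ) := by
  let e : (Σ κ, E κ) ≃ Σ κ : Fin n, E κ :=
    { toFun x := ⟨⟨x.1, lt_of_not_ge fun h => (hE x.1 h).false x.2⟩, x.2⟩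
      invFun y := ⟨y.1, y.2⟩
      left_inv _ := rfl
      right_inv _ := rfl }
  rw [Nat.card_congr e, Nat.card_sigma, Fin.sum_univ_eq_sum_range (fun κ => Nat.card (E κ))]

theorem Nat.card_fin_orderEmbedding (k : ℕ) (I : Type*) [LinearOrder I] :
    Nat.card (Fin k ↪o I) = (Nat.card I).choose k := by
  rw [Nat.card_congr Set.powersetCard.ofFinEmbEquiv, Set.powersetCard.card]

theorem Nat.sum_range_choose_eq_fib_two_mul (n : ℕ) :
    ∑ κ ∈ range n, (n + κ).choose (2 * κ + 1) = Nat.fib (2 * n) := by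
  rcases n with _ | n
  · simp
  have hlow : ∑ k ∈ range (n + 1), k.choose (2 * n + 1 - k) = 0 :=
    sum_eq_zero fun k hk => Nat.choose_eq_zero_of_lt (by rw [mem_range] at hk; omega)
  rw [show 2 * (n + 1) = 2 * n + 1 + 1 by ring, Nat.fib_succ_eq_sum_choose,
    Finset.Nat.sum_antidiagonal_eq_sum_range_succ (fun a b => a.choose b),
    show (2 * n + 1).succ = (n + 1) + (n + 1) by omega,
    sum_range_add (fun k => k.choose (2 * n + 1 - k)), hlow, zero_add]
  refine sum_congr rfl fun κ hκ => Nat.choose_symm_of_eq_add ?_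
  rw [mem_range] at hκ
  omega

def interleaveEquiv (κ : ℕ) : Fin (κ + 1) ⊕ Fin κ ≃ Fin (2 * κ + 1) where
  toFun := Sum.elim (fun s => ⟨2 * s, by omega⟩) (fun s => ⟨2 * s + 1, by omega⟩)
  invFun t := if h : (t : ℕ) % 2 = 0 then .inl ⟨t / 2, by omega⟩ else .inr ⟨t / 2, by omega⟩
  left_inv := by rintro (s | s) <;> grind
  right_inv t := by grind

@[simp]
theorem interleaveEquiv_inl_val {κ : ℕ} (s : Fin (κ + 1)) :
    (interleaveEquiv κ (.inl s) : ℕ) = 2 * s := rfl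

@[simp]
theorem interleaveEquiv_inr_val {κ : ℕ} (s : Fin κ) :
    (interleaveEquiv κ (.inr s) : ℕ) = 2 * s + 1 := rfl

theorem strictMono_iff_interleaveEquiv {α : Type*} [Preorder α] {κ : ℕ}
    {f : Fin (2 * κ + 1) → α} :
    StrictMono f ↔ ∀ s : Fin κ,
      f (interleaveEquiv κ (.inl s.castSucc)) < f (interleaveEquiv κ (.inr s)) ∧
      f (interleaveEquiv κ (.inr s)) < f (interleaveEquiv κ (.inl s.succ)) := by
  rw [Fin.strictMono_iff_lt_succ]
  refine ⟨fun hf s => ⟨hf ⟨2 * s, by omega⟩, hf ⟨2 * s + 1, by omega⟩⟩, fun hf u => ?_⟩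
  obtain ⟨s, hs | hs⟩ := Nat.even_or_odd' u
  · convert (hf ⟨s, by omega⟩).1 using 2 <;> ext <;> simp [hs]
  · convert (hf ⟨s, by omega⟩).2 using 2 <;> ext <;> simp [hs, mul_add]

def IsAlternating {κ : ℕ} (i : Fin (κ + 1) → ℕ) (j : Fin κ → ℕ) : Prop :=
  ∀ t, i t.castSucc < j t ∧ j t ≤ i t.succ

theorem IsAlternating.one_le_and_le {n m κ : ℕ} {i : Fin (κ + 1) → ℕ} {j : Fin κ → ℕ}
    (hm : n - 1 ≤ m) (hi : ∀ t, i t < n) (h : IsAlternating i j) (t : Fin κ) :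
    1 ≤ j t ∧ j t ≤ m := by
  have := h t
  have := hi t.succ
  omega

theorem IsAlternating.strictMono {κ : ℕ} {i : Fin (κ + 1) → ℕ} {j : Fin κ → ℕ}
    (h : IsAlternating i j) : StrictMono i :=
  Fin.strictMono_iff_lt_succ.2 fun t => (h t).1.trans_le (h t).2

def interleaveShift {κ : ℕ} (i : Fin (κ + 1) → ℕ) (j : Fin κ → ℕ) (t : Fin (2 * κ + 1)) : ℕ :=
  Sum.elim (fun s => i s + s) (fun s => j s + s) ((interleaveEquiv κ).symm t)

@[simp]
theorem interleaveShift_inl {κ : ℕ} (i : Fin (κ + 1) → ℕ) (j : Fin κ → ℕ) (s : Fin (κ + 1)) :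
    interleaveShift i j (interleaveEquiv κ (.inl s)) = i s + s := by
  simp [interleaveShift]

@[simp]
theorem interleaveShift_inr {κ : ℕ} (i : Fin (κ + 1) → ℕ) (j : Fin κ → ℕ) (s : Fin κ) :
    interleaveShift i j (interleaveEquiv κ (.inr s)) = j s + s := by
  simp [interleaveShift]

theorem strictMono_interleaveShift_iff {κ : ℕ} {i : Fin (κ + 1) → ℕ} {j : Fin κ → ℕ} :
    StrictMono (interleaveShift i j) ↔ IsAlternating i j := by
  rw [strictMono_iff_interleaveEquiv]
  refine forall_congr' fun s => ?_
  simp only [interleaveShift_inl, interleaveShift_inr, Fin.val_castSucc, Fin.val_succ]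
  omega

theorem interleaveShift_sub_eq {κ N : ℕ} (g : Fin (2 * κ + 1) ↪o Fin N) :
    interleaveShift (fun s => g (interleaveEquiv κ (.inl s)) - s)
      (fun s => g (interleaveEquiv κ (.inr s)) - s) = fun t => (g t : ℕ) := by
  funext t
  have hle := Fin.val_le_val_of_strictMono g.strictMono t
  obtain ⟨s | s, rfl⟩ := (interleaveEquiv κ).surjective t
  all_goals
    simp only [interleaveShift_inl, interleaveShift_inr, interleaveEquiv_inl_val,
      interleaveEquiv_inr_val] at hle ⊢
    omega

def alternatingEquivOrderEmbedding (n κ : ℕ) :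
    {q : (Fin (κ + 1) → ℕ) × (Fin κ → ℕ) // (∀ t, q.1 t < n) ∧ IsAlternating q.1 q.2} ≃
      (Fin (2 * κ + 1) ↪o Fin (n + κ)) where
  toFun q := OrderEmbedding.ofStrictMono
    (fun t => ⟨interleaveShift q.1.1 q.1.2 t, by
      obtain ⟨s | s, rfl⟩ := (interleaveEquiv κ).surjective t
      · simpa using Nat.add_lt_add_of_lt_of_le (q.2.1 s) (Nat.lt_succ_iff.1 s.2)
      · simpa using Nat.add_lt_add ((q.2.2 s).2.trans_lt (q.2.1 s.succ)) s.2⟩)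
    (fun _ _ h => Fin.mk_lt_mk.2 (strictMono_interleaveShift_iff.2 q.2.2 h))
  invFun g :=
    have halt : IsAlternating (fun s => g (interleaveEquiv κ (.inl s)) - s)
        (fun s => g (interleaveEquiv κ (.inr s)) - s) := by
      rw [← strictMono_interleaveShift_iff, interleaveShift_sub_eq]
      exact fun _ _ h => g.strictMono h
    ⟨(_, _), fun t => by
      have hlast := (g (interleaveEquiv κ (.inl (Fin.last κ)))).2
      have hle := Fin.val_le_val_of_strictMono g.strictMono (interleaveEquiv κ (.inl (Fin.last κ)))
      have hmono := halt.strictMono.monotone (Fin.le_last t)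
      simp only [Fin.val_last, interleaveEquiv_inl_val] at hle hmono
      show (g (interleaveEquiv κ (.inl t)) : ℕ) - t < n
      omega, halt⟩
  left_inv q := by
    ext s
    · show interleaveShift q.1.1 q.1.2 (interleaveEquiv κ (.inl s)) - s = q.1.1 s
      simp
    · show interleaveShift q.1.1 q.1.2 (interleaveEquiv κ (.inr s)) - s = q.1.2 s
      simp
  right_inv g := by
    ext t
    exact congrFun (interleaveShift_sub_eq g) t

theorem stmt10_general (n m : ℕ) (hm : n - 1 ≤ m) :
    Nat.card {p : (κ : ℕ) × (Fin (κ + 1) → ℕ) × (Fin κ → ℕ) //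
      (∀ t, p.2.1 t < n) ∧ (∀ t, 1 ≤ p.2.2 t ∧ p.2.2 t ≤ m) ∧
      (∀ t : Fin p.1, p.2.1 t.castSucc < p.2.2 t ∧ p.2.2 t ≤ p.2.1 t.succ)} =
    Nat.fib (2 * n) := by
  have hempty (κ : ℕ) (hκ : n ≤ κ) : IsEmpty (Fin (2 * κ + 1) ↪o Fin (n + κ)) :=
    ⟨fun f => by have := Fin.le_of_embedding f.toEmbedding; omega⟩
  calc Nat.card _
      = Nat.card (Σ κ, {q : (Fin (κ + 1) → ℕ) × (Fin κ → ℕ) //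
          (∀ t, q.1 t < n) ∧ IsAlternating q.1 q.2}) :=
        Nat.card_congr
          { toFun p := ⟨p.1.1, p.1.2, p.2.1, p.2.2.2⟩
            invFun x := ⟨⟨x.1, x.2.1⟩, x.2.2.1, x.2.2.2.one_le_and_le hm x.2.2.1, x.2.2.2⟩
            left_inv _ := rfl
            right_inv _ := rfl }
    _ = Nat.card (Σ κ, Fin (2 * κ + 1) ↪o Fin (n + κ)) :=
        Nat.card_congr (.sigmaCongrRight (alternatingEquivOrderEmbedding n))
    _ = ∑ κ ∈ range n, (n + κ).choose (2 * κ + 1) := by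
        simp only [Nat.card_sigma_eq_sum_range n hempty, Nat.card_fin_orderEmbedding, Nat.card_fin]
    _ = Nat.fib (2 * n) := Nat.sum_range_choose_eq_fib_two_mul n

/-- Count of charge-1 boundary bound states: the number of alternating chains
`(i_1, j_1, i_2, j_2, …, j_{k−1}, i_k)` of odd length `2k−1` (`k ≥ 1`), with
`i_t ∈ {0, …, n−1}`, `j_t ∈ {1, …, m}`, and `i_t < j_t ≤ i_{t+1}` for `1 ≤ t ≤ k−1`,
equals the Fibonacci number `F(2n)` (with `F(1) = F(2) = 1`, i.e. `F = Nat.fib`).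
Here a chain with `k` entries `i` and `k−1` entries `j` is encoded as a triple
`⟨κ, i, j⟩` with `κ = k − 1`, `i : Fin (κ+1) → ℕ` and `j : Fin κ → ℕ`. -/
theorem stmt10 (n m : ℕ) (hn : 1 ≤ n) (hm : n - 1 ≤ m) :
    Nat.card {p : (κ : ℕ) × (Fin (κ + 1) → ℕ) × (Fin κ → ℕ) //
      (∀ t, p.2.1 t < n) ∧ (∀ t, 1 ≤ p.2.2 t ∧ p.2.2 t ≤ m) ∧
      (∀ t : Fin p.1, p.2.1 t.castSucc < p.2.2 t ∧ p.2.2 t ≤ p.2.1 t.succ)} =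
    Nat.fib (2 * n) :=
  stmt10_general n m hm
end

section
/- Let n ≥ 1 be an integer and λ > n a real number, and suppose the points π/2, π/2 − lπ/(2λ) (1 ≤ l ≤ n) and lπ/(2λ) (1 ≤ l ≤ n−1) are pairwise distinct. Then in the strip 0 < Re u ≤ π/2 the meromorphic function R_0^{(n)}(u) has poles exactly at: u = π/2 (simple), u = lπ/(2λ) for l = 1, …, n−1 (simple), u = π/2 − nπ/(2λ) (simple), and u = π/2 − lπ/(2λ) for l = 1, …, n−1 (order two); and R_0^{(n)} has no zeroes in this strip. -/
open Complex Real Filter Topology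

/-- The boundary-parameter-independent factor `R_0^{(n)}(u)` of the ground-state
reflection amplitude of the `n`-th breather. -/
noncomputable def R0brn (lam : ℝ) (n : ℕ) (u : ℂ) : ℂ :=
  (blk (1 / 2) u * blk ((n : ℝ) / (2 * lam) + 1) u / blk ((n : ℝ) / (2 * lam) + 3 / 2) u) *
  ∏ l ∈ Finset.Icc 1 (n - 1),
    (blk ((l : ℝ) / (2 * lam)) u * blk ((l : ℝ) / (2 * lam) + 1) u) /
      (blk ((l : ℝ) / (2 * lam) + 3 / 2) u) ^ 2

/-!
Each block is `(y)_u = sin((u + πy)/2) / sin((u - πy)/2)`, so `R_0^{(n)}` is a quotient of two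
products of the entire functions `sin((u + πs)/2)`, whose zeros `u ∈ -πs + 2πℤ` are all simple.
In the strip `0 < Re u ≤ π/2` no factor of the numerator vanishes and each factor of the
denominator vanishes at most once, so the order of the pole at `p` is the number of denominator
factors vanishing at `p`. Counting them block by block gives `π/2` and `π/2 - nπ/(2λ)` once,
`lπ/(2λ)` once and `π/2 - lπ/(2λ)` twice for each `1 ≤ l ≤ n - 1`; distinctness (`l + l' ≠ λ`)
keeps these from merging.
-/

theorem AnalyticAt.exists_eq_sub_mul_of_deriv_ne_zero {f : ℂ → ℂ} {p : ℂ}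
    (hf : AnalyticAt ℂ f p) (hp : f p = 0) (hd : deriv f p ≠ 0) :
    ∃ g : ℂ → ℂ, AnalyticAt ℂ g p ∧ g p ≠ 0 ∧ ∀ u, f u = (u - p) * g u := by
  obtain ⟨q, hq⟩ := hf
  refine ⟨dslope f p, ⟨q.fslope, hq.has_fpower_series_dslope_fslope⟩, by rwa [dslope_same],
    fun u => ?_⟩
  simpa [hp] using (sub_smul_dslope f p u).symm

theorem Multiset.countP_bind_congr {α β γ : Type*} {S : Multiset α} {f : α → Multiset β}
    {g : α → Multiset γ} {P : β → Prop} {Q : γ → Prop} [DecidablePred P] [DecidablePred Q]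
    (h : ∀ a ∈ S, (f a).countP P = (g a).countP Q) :
    (S.bind f).countP P = (S.bind g).countP Q := by
  simp only [Multiset.countP_eq_card_filter, Multiset.filter_bind, Multiset.card_bind] at h ⊢
  exact congrArg _ (Multiset.map_congr rfl h)

noncomputable def sinShift (s : ℝ) (u : ℂ) : ℂ := Complex.sin ((u + (π * s : ℝ)) / 2)

theorem hasDerivAt_sinShift (s : ℝ) (u : ℂ) :
    HasDerivAt (sinShift s) (Complex.cos ((u + (π * s : ℝ)) / 2) * (1 / 2)) u :=
  (Complex.hasDerivAt_sin _).comp u (((hasDerivAt_id u).add_const _).div_const 2)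

theorem differentiable_sinShift (s : ℝ) : Differentiable ℂ (sinShift s) :=
  fun u => (hasDerivAt_sinShift s u).differentiableAt

theorem sinShift_eq_zero_iff {s : ℝ} {u : ℂ} :
    sinShift s u = 0 ↔ ∃ k : ℤ, u = ((2 * k - s) * π : ℝ) := by
  simp only [sinShift, Complex.sin_eq_zero_iff]
  refine exists_congr fun k => ⟨fun h => ?_, fun h => ?_⟩
  · push_cast at h ⊢
    linear_combination 2 * h
  · rw [h]
    push_cast
    ring

theorem sinShift_eq_sub_mul {s : ℝ} {p : ℂ} (hp : sinShift s p = 0) :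
    ∃ g : ℂ → ℂ, AnalyticAt ℂ g p ∧ g p ≠ 0 ∧ ∀ u, sinShift s u = (u - p) * g u := by
  refine ((differentiable_sinShift s).analyticAt p).exists_eq_sub_mul_of_deriv_ne_zero hp ?_
  rw [(hasDerivAt_sinShift s p).deriv]
  have hcos : Complex.cos ((p + (π * s : ℝ)) / 2) ≠ 0 := fun hcos => by
    have h := Complex.sin_sq_add_cos_sq ((p + (π * s : ℝ)) / 2)
    rw [← sinShift, hp, hcos] at h
    norm_num at h
  simpa using hcos

noncomputable def prodSinShift (M : Multiset ℝ) (u : ℂ) : ℂ := (M.map (sinShift · u)).prod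

theorem prodSinShift_add (M N : Multiset ℝ) (u : ℂ) :
    prodSinShift (M + N) u = prodSinShift M u * prodSinShift N u := by
  simp [prodSinShift]

theorem prodSinShift_zero : prodSinShift 0 = 1 := by
  ext u
  simp [prodSinShift]

theorem prodSinShift_cons (s : ℝ) (M : Multiset ℝ) :
    prodSinShift (s ::ₘ M) = sinShift s * prodSinShift M := by
  ext u
  simp [prodSinShift]

theorem differentiable_prodSinShift (M : Multiset ℝ) : Differentiable ℂ (prodSinShift M) := by
  induction M using Multiset.induction_on with
  | empty => exact prodSinShift_zero ▸ differentiable_const 1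
  | cons s M ih => exact prodSinShift_cons s M ▸ (differentiable_sinShift s).mul ih

theorem prodSinShift_ne_zero {M : Multiset ℝ} {p : ℂ} (h : ∀ s ∈ M, sinShift s p ≠ 0) :
    prodSinShift M p ≠ 0 :=
  Multiset.prod_ne_zero fun h0 => by
    obtain ⟨s, hs, hs0⟩ := Multiset.mem_map.1 h0
    exact h s hs hs0

theorem prodSinShift_eq_pow_mul {M : Multiset ℝ} {p : ℂ} (h : ∀ s ∈ M, sinShift s p = 0) :
    ∃ g : ℂ → ℂ, AnalyticAt ℂ g p ∧ g p ≠ 0 ∧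
      ∀ u, prodSinShift M u = (u - p) ^ Multiset.card M * g u := by
  induction M using Multiset.induction_on with
  | empty => exact ⟨fun _ => 1, analyticAt_const, one_ne_zero, by simp [prodSinShift]⟩
  | cons s M ih =>
    obtain ⟨g, hg, hg0, hgu⟩ := ih fun c hc => h c (Multiset.mem_cons_of_mem hc)
    obtain ⟨g₁, hg₁, hg₁0, hg₁u⟩ := sinShift_eq_sub_mul (h s (Multiset.mem_cons_self s M))
    refine ⟨fun u => g₁ u * g u, hg₁.mul hg, mul_ne_zero hg₁0 hg0, fun u => ?_⟩
    rw [prodSinShift_cons, Pi.mul_apply, hgu, hg₁u, Multiset.card_cons, pow_succ]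
    ring

/-- Each factor of the denominator vanishing at `p` does so simply, so the pole order is their
number. -/
theorem hasPoleOfOrder_prodSinShift_div {M N : Multiset ℝ} {p : ℂ}
    (hM : ∀ s ∈ M, sinShift s p ≠ 0) :
    HasPoleOfOrder (fun u => prodSinShift M u / prodSinShift N u) p
      (N.countP (sinShift · p = 0)) := by
  obtain ⟨g, hg, hg0, hgu⟩ := prodSinShift_eq_pow_mul (M := N.filter (sinShift · p = 0))
    fun s hs => (Multiset.mem_filter.1 hs).2
  set N₀ := N.filter (¬sinShift · p = 0)
  have hN₀ : ∀ s ∈ N₀, sinShift s p ≠ 0 := fun s hs => (Multiset.mem_filter.1 hs).2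
  refine ⟨fun u => prodSinShift M u / (prodSinShift N₀ u * g u),
    ((differentiable_prodSinShift M).analyticAt p).div
      (((differentiable_prodSinShift N₀).analyticAt p).mul hg)
      (mul_ne_zero (prodSinShift_ne_zero hN₀) hg0),
    div_ne_zero (prodSinShift_ne_zero hM) (mul_ne_zero (prodSinShift_ne_zero hN₀) hg0),
    Filter.Eventually.of_forall fun u => ?_⟩
  have hsplit : prodSinShift N u = prodSinShift (N.filter (sinShift · p = 0)) u *
      prodSinShift N₀ u := by
    rw [← prodSinShift_add, Multiset.filter_add_not]
  simp only [hsplit, hgu, Multiset.countP_eq_card_filter, div_div]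
  ring

section Strip

variable {s t : ℝ} {p : ℂ}

theorem sinShift_ne_zero_of_re_mem (j : ℤ) (h₁ : 2 * j ≤ s) (h₂ : s + 1 / 2 < 2 * j + 2)
    (hp : p.re ∈ Set.Ioc 0 (π / 2)) : sinShift s p ≠ 0 := by
  intro h
  obtain ⟨k, rfl⟩ := sinShift_eq_zero_iff.1 h
  obtain ⟨hk₁, hk₂⟩ := hp
  rw [Complex.ofReal_re] at hk₁ hk₂
  have hjk : (j : ℝ) < k := by nlinarith [pi_pos]
  have hkj : (k : ℝ) < j + 1 := by nlinarith [pi_pos]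
  have hjk' : j < k := by exact_mod_cast hjk
  have hkj' : k < j + 1 := by exact_mod_cast hkj
  omega

theorem sinShift_eq_zero_iff_of_re_mem {x : ℝ} (j : ℤ) (hx : x + π * s = 2 * j * π)
    (hx₀ : x ∈ Set.Ioc 0 (π / 2)) (hp : p.re ∈ Set.Ioc 0 (π / 2)) :
    sinShift s p = 0 ↔ p = x := by
  refine ⟨fun h => ?_, fun h => sinShift_eq_zero_iff.2 ⟨j, by rw [h]; congr 1; linarith⟩⟩
  obtain ⟨k, rfl⟩ := sinShift_eq_zero_iff.1 h
  obtain ⟨hk₁, hk₂⟩ := hp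
  rw [Complex.ofReal_re] at hk₁ hk₂
  have hjk : (j : ℝ) - 1 < k := by nlinarith [pi_pos, hx₀.1, hx₀.2]
  have hkj : (k : ℝ) < j + 1 := by nlinarith [pi_pos, hx₀.1, hx₀.2]
  have hjk' : j - 1 < k := by exact_mod_cast hjk
  have hkj' : k < j + 1 := by exact_mod_cast hkj
  obtain rfl : k = j := by omega
  congr 1
  linarith

theorem sinShift_ne_zero_of_mem_Ico (ht : t ∈ Set.Ico 0 (1 / 2))
    (hp : p.re ∈ Set.Ioc 0 (π / 2)) :
    sinShift t p ≠ 0 ∧ sinShift (t + 1) p ≠ 0 ∧ sinShift (-(t + 3 / 2)) p ≠ 0 := by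
  obtain ⟨ht₀, ht₁⟩ := ht
  refine ⟨sinShift_ne_zero_of_re_mem 0 ?_ ?_ hp, sinShift_ne_zero_of_re_mem 0 ?_ ?_ hp,
    sinShift_ne_zero_of_re_mem (-1) ?_ ?_ hp⟩ <;> push_cast <;> linarith

theorem sinShift_neg_eq_zero_iff (ht : t ∈ Set.Ioc 0 (1 / 2)) (hp : p.re ∈ Set.Ioc 0 (π / 2)) :
    sinShift (-t) p = 0 ↔ p = (π * t : ℝ) :=
  sinShift_eq_zero_iff_of_re_mem 0 (by push_cast; ring)
    ⟨by nlinarith [pi_pos, ht.1], by nlinarith [pi_pos, ht.2]⟩ hp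

theorem sinShift_neg_add_one_ne_zero (ht : t ∈ Set.Ioc (-1 / 2) 1) (hp : p.re ∈ Set.Ioc 0 (π / 2)) :
    sinShift (-(t + 1)) p ≠ 0 :=
  sinShift_ne_zero_of_re_mem (-1) (by push_cast; linarith [ht.2]) (by push_cast; linarith [ht.1]) hp

theorem sinShift_add_three_halves_eq_zero_iff (ht : t ∈ Set.Ico 0 (1 / 2))
    (hp : p.re ∈ Set.Ioc 0 (π / 2)) :
    sinShift (t + 3 / 2) p = 0 ↔ p = (π * (1 / 2 - t) : ℝ) :=
  sinShift_eq_zero_iff_of_re_mem 1 (by push_cast; ring)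
    ⟨by nlinarith [pi_pos, ht.2], by nlinarith [pi_pos, ht.1]⟩ hp

end Strip

section Levels

variable {lam a : ℝ}

theorem div_two_mul_mem_Ioo (ha : 0 < a) (hlam : a < lam) : a / (2 * lam) ∈ Set.Ioo 0 (1 / 2) :=
  ⟨by apply div_pos <;> linarith, by rw [div_lt_iff₀ (by linarith)]; linarith⟩

theorem mul_pi_div_two_mul_mem_Ioc (ha : 0 < a) (hlam : a ≤ lam) :
    a * π / (2 * lam) ∈ Set.Ioc 0 (π / 2) := by
  have hlam₀ : 0 < lam := by linarith
  refine ⟨by positivity, ?_⟩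
  rw [div_le_iff₀ (by positivity)]
  nlinarith [pi_pos]

end Levels

theorem blk_eq_sinShift_div (y : ℝ) (u : ℂ) : blk y u = sinShift y u / sinShift (-y) u := by
  simp only [blk, sinShift]
  push_cast
  ring_nf

theorem blk_neg (y : ℝ) (u : ℂ) : blk (-y) u = (blk y u)⁻¹ := by
  rw [blk_eq_sinShift_div, blk_eq_sinShift_div, neg_neg, inv_div]

/-- `R_0^{(n)}(u) = ∏_{y ∈ shifts λ n} (y)_u`, a block of the denominator entering as `-y`
(`(-y)_u = 1/(y)_u`). -/
noncomputable def shifts (lam : ℝ) (n : ℕ) : Multiset ℝ :=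
  {1 / 2, n / (2 * lam) + 1, -(n / (2 * lam) + 3 / 2)} +
    (Finset.Icc 1 (n - 1)).val.bind fun l =>
      {l / (2 * lam), l / (2 * lam) + 1, -(l / (2 * lam) + 3 / 2), -(l / (2 * lam) + 3 / 2)}

theorem R0brn_eq_prod_blk (lam : ℝ) (n : ℕ) (u : ℂ) :
    R0brn lam n u = ((shifts lam n).map (blk · u)).prod := by
  simp only [R0brn, shifts, Multiset.map_add, Multiset.prod_add, Multiset.map_bind,
    Multiset.prod_bind, Multiset.insert_eq_cons, Multiset.map_cons, Multiset.map_singleton,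
    Multiset.prod_cons, Multiset.prod_singleton, blk_neg, Finset.prod_map_val]
  simp only [div_eq_mul_inv, ← inv_pow]
  ring_nf

theorem R0brn_eq_div (lam : ℝ) (n : ℕ) :
    R0brn lam n =
      fun u => prodSinShift (shifts lam n) u / prodSinShift ((shifts lam n).map Neg.neg) u := by
  ext u
  simp only [R0brn_eq_prod_blk, blk_eq_sinShift_div, Multiset.prod_map_div, prodSinShift,
    Multiset.map_map, Function.comp_def]

/-- The poles of `R_0^{(n)}` in the strip `0 < Re u ≤ π/2`, with multiplicity, in units of
`π / (2λ)`. -/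
def poleLevels (lam : ℝ) (n : ℕ) : Multiset ℝ :=
  {lam, lam - n} + (Finset.Icc 1 (n - 1)).val.bind fun l => {(l : ℝ), lam - l, lam - l}

section R0brn

variable {lam : ℝ} {n : ℕ} {p : ℂ}

theorem sinShift_ne_zero_of_mem_shifts (hn : 1 ≤ n) (hlam : (n : ℝ) < lam)
    (hp : p.re ∈ Set.Ioc 0 (π / 2)) : ∀ s ∈ shifts lam n, sinShift s p ≠ 0 := by
  have hA := div_two_mul_mem_Ioo (a := n) (by exact_mod_cast hn) hlam
  intro s hs
  simp only [shifts, Multiset.mem_add, Multiset.insert_eq_cons, Multiset.mem_cons,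
    Multiset.mem_singleton, Multiset.mem_bind, Finset.mem_val, Finset.mem_Icc] at hs
  rcases hs with (rfl | rfl | rfl) | ⟨l, ⟨hl₁, hl₂⟩, hs⟩
  · exact sinShift_ne_zero_of_re_mem 0 (by norm_num) (by norm_num) hp
  · exact (sinShift_ne_zero_of_mem_Ico (Set.Ioo_subset_Ico_self hA) hp).2.1
  · exact (sinShift_ne_zero_of_mem_Ico (Set.Ioo_subset_Ico_self hA) hp).2.2
  · have hl : (l : ℝ) < lam := lt_of_le_of_lt (by exact_mod_cast (by omega : l ≤ n)) hlam
    have ht := sinShift_ne_zero_of_mem_Ico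
      (Set.Ioo_subset_Ico_self (div_two_mul_mem_Ioo (by exact_mod_cast hl₁) hl)) hp
    rcases hs with rfl | rfl | rfl | rfl
    exacts [ht.1, ht.2.1, ht.2.2, ht.2.2]

theorem countP_shifts_eq_countP_poleLevels (hn : 1 ≤ n) (hlam : (n : ℝ) < lam)
    (hp : p.re ∈ Set.Ioc 0 (π / 2)) :
    (shifts lam n).countP (fun s => sinShift (-s) p = 0) =
      (poleLevels lam n).countP (fun L => p = (L * π / (2 * lam) : ℝ)) := by
  have hlam₀ : 0 < lam := by linarith [(by exact_mod_cast hn : (1 : ℝ) ≤ n)]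
  have hpos (a : ℝ) : π * (a / (2 * lam)) = a * π / (2 * lam) := by ring
  have hpos' (a : ℝ) : π * (1 / 2 - a / (2 * lam)) = (lam - a) * π / (2 * lam) := by field_simp
  have hA := div_two_mul_mem_Ioo (a := n) (by exact_mod_cast hn) hlam
  rw [shifts, poleLevels, Multiset.countP_add, Multiset.countP_add]
  congr 1
  · have hhalf : π * (1 / 2) = lam * π / (2 * lam) := by field_simp
    have z₁ := sinShift_neg_eq_zero_iff (t := 1 / 2) ⟨by norm_num, le_rfl⟩ hp
    have z₂ := sinShift_neg_add_one_ne_zero (t := n / (2 * lam))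
      ⟨by linarith [hA.1], by linarith [hA.2]⟩ hp
    have z₃ := sinShift_add_three_halves_eq_zero_iff (Set.Ioo_subset_Ico_self hA) hp
    rw [hhalf] at z₁
    rw [hpos'] at z₃
    simp only [Multiset.insert_eq_cons, ← Multiset.cons_zero, Multiset.countP_cons,
      Multiset.countP_zero, neg_neg, z₁, z₂, z₃]
    simp
  · refine Multiset.countP_bind_congr fun l hl => ?_
    rw [Finset.mem_val, Finset.mem_Icc] at hl
    have hl' : (l : ℝ) < lam := lt_of_le_of_lt (by exact_mod_cast (by omega : l ≤ n)) hlam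
    have ht := div_two_mul_mem_Ioo (by exact_mod_cast hl.1) hl'
    have z₁ := sinShift_neg_eq_zero_iff (Set.Ioo_subset_Ioc_self ht) hp
    have z₂ := sinShift_neg_add_one_ne_zero (t := l / (2 * lam))
      ⟨by linarith [ht.1], by linarith [ht.2]⟩ hp
    have z₃ := sinShift_add_three_halves_eq_zero_iff (Set.Ioo_subset_Ico_self ht) hp
    rw [hpos] at z₁
    rw [hpos'] at z₃
    simp only [Multiset.insert_eq_cons, ← Multiset.cons_zero, Multiset.countP_cons,
      Multiset.countP_zero, neg_neg, z₁, z₂, z₃]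
    simp

theorem R0brn_hasPoleOfOrder (hn : 1 ≤ n) (hlam : (n : ℝ) < lam)
    (hp : p.re ∈ Set.Ioc 0 (π / 2)) :
    HasPoleOfOrder (R0brn lam n) p
      ((poleLevels lam n).countP fun L => p = (L * π / (2 * lam) : ℝ)) := by
  rw [R0brn_eq_div, ← countP_shifts_eq_countP_poleLevels hn hlam hp,
    Multiset.countP_eq_card_filter, ← Multiset.countP_map Neg.neg _ (sinShift · p = 0)]
  exact hasPoleOfOrder_prodSinShift_div (sinShift_ne_zero_of_mem_shifts hn hlam hp)

theorem R0brn_analyticAt_and_ne_zero (hn : 1 ≤ n) (hlam : (n : ℝ) < lam)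
    (hp : p.re ∈ Set.Ioc 0 (π / 2))
    (hpole : ∀ L ∈ poleLevels lam n, p ≠ (L * π / (2 * lam) : ℝ)) :
    AnalyticAt ℂ (R0brn lam n) p ∧ R0brn lam n p ≠ 0 := by
  have hM := sinShift_ne_zero_of_mem_shifts hn hlam hp
  have hN : ∀ s ∈ (shifts lam n).map Neg.neg, sinShift s p ≠ 0 := by
    simpa using Multiset.countP_eq_zero.1
      ((countP_shifts_eq_countP_poleLevels hn hlam hp).trans (Multiset.countP_eq_zero.2 hpole))
  rw [R0brn_eq_div]
  exact ⟨((differentiable_prodSinShift _).analyticAt p).div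
      ((differentiable_prodSinShift _).analyticAt p) (prodSinShift_ne_zero hN),
    div_ne_zero (prodSinShift_ne_zero hM) (prodSinShift_ne_zero hN)⟩

theorem R0brn_hasPoleOfOrder_count_poleLevels (hn : 1 ≤ n) (hlam : (n : ℝ) < lam) {L : ℝ}
    (hL₀ : 0 < L) (hL : L ≤ lam) :
    HasPoleOfOrder (R0brn lam n) (L * π / (2 * lam) : ℝ) ((poleLevels lam n).count L) := by
  have hlam₀ : 0 < lam := by linarith
  convert R0brn_hasPoleOfOrder hn hlam (p := (L * π / (2 * lam) : ℝ))
    (by rw [Complex.ofReal_re]; exact mul_pi_div_two_mul_mem_Ioc hL₀ hL) using 1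
  refine Multiset.countP_congr rfl fun L' _ => propext ?_
  rw [Complex.ofReal_inj, div_left_inj' (by positivity), mul_left_inj' pi_ne_zero]

end R0brn

section PoleLevels

variable {lam : ℝ} {n : ℕ}

theorem forall_mem_poleLevels {P : ℝ → Prop} (hn : 1 ≤ n) (h₀ : P lam)
    (h₁ : ∀ l : ℕ, 1 ≤ l → l ≤ n - 1 → P l) (h₂ : ∀ l : ℕ, 1 ≤ l → l ≤ n → P (lam - l)) :
    ∀ L ∈ poleLevels lam n, P L := by
  intro L hL
  simp only [poleLevels, Multiset.mem_add, Multiset.insert_eq_cons, Multiset.mem_cons,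
    Multiset.mem_singleton, Multiset.mem_bind, Finset.mem_val, Finset.mem_Icc] at hL
  rcases hL with (rfl | rfl) | ⟨l, ⟨hl₁, hl₂⟩, rfl | rfl | rfl⟩
  exacts [h₀, h₂ n hn le_rfl, h₁ l hl₁ hl₂, h₂ l hl₁ (by omega), h₂ l hl₁ (by omega)]

theorem count_poleLevels (L : ℝ) :
    (poleLevels lam n).count L =
      (if L = lam then 1 else 0) + (if L = lam - n then 1 else 0) +
        ∑ l ∈ Finset.Icc 1 (n - 1),
          ((if L = l then 1 else 0) + (if L = lam - l then 2 else 0)) := by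
  simp only [poleLevels, Multiset.count_add, Multiset.count_bind, Multiset.insert_eq_cons,
    Multiset.count_cons, Multiset.count_singleton, Finset.sum_map_val]
  congr 1
  · exact add_comm _ _
  · refine Finset.sum_congr rfl fun l _ => ?_
    split_ifs <;> rfl

theorem count_poleLevels_lam (hn : 1 ≤ n) (hlam : (n : ℝ) < lam) :
    (poleLevels lam n).count lam = 1 := by
  have hn' : (1 : ℝ) ≤ n := by exact_mod_cast hn
  have hsum₀ : ∑ l ∈ Finset.Icc 1 (n - 1),
      ((if lam = l then 1 else 0) + (if lam = lam - l then 2 else 0)) = 0 := by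
    refine Finset.sum_eq_zero fun l hl => ?_
    obtain ⟨hl₁, hl₂⟩ := Finset.mem_Icc.1 hl
    have hl₁' : (1 : ℝ) ≤ l := by exact_mod_cast hl₁
    have hl₂' : (l : ℝ) < n := by exact_mod_cast (by omega : l < n)
    rw [if_neg (by linarith), if_neg (by linarith), add_zero]
  rw [count_poleLevels, if_pos rfl, if_neg (by linarith), hsum₀]

variable (hsum : ∀ l ∈ Finset.Icc 1 n, ∀ l' ∈ Finset.Icc 1 (n - 1), (l : ℝ) + l' ≠ lam)
include hsum

theorem count_poleLevels_natCast (hlam : (n : ℝ) < lam) {l₀ : ℕ}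
    (hl₀ : l₀ ∈ Finset.Icc 1 (n - 1)) : (poleLevels lam n).count (l₀ : ℝ) = 1 := by
  obtain ⟨hl₀₁, hl₀₂⟩ := Finset.mem_Icc.1 hl₀
  have hn : (l₀ : ℝ) < n := by exact_mod_cast (by omega : l₀ < n)
  have hsum₀ := hsum n (Finset.mem_Icc.2 ⟨by omega, le_rfl⟩) l₀ hl₀
  have e : ∀ l ∈ Finset.Icc 1 (n - 1),
      ((if (l₀ : ℝ) = l then 1 else 0) + (if (l₀ : ℝ) = lam - l then 2 else 0)) =
        if l₀ = l then 1 else 0 := fun l hl => by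
    obtain ⟨hl₁, hl₂⟩ := Finset.mem_Icc.1 hl
    have hsuml := hsum l (Finset.mem_Icc.2 ⟨hl₁, by omega⟩) l₀ hl₀
    rw [if_neg (show (l₀ : ℝ) ≠ lam - l from fun h => hsuml (by linarith)), add_zero]
    simp only [Nat.cast_inj]
  rw [count_poleLevels, Finset.sum_congr rfl e, Finset.sum_ite_eq, if_pos hl₀,
    if_neg (by linarith), if_neg (show (l₀ : ℝ) ≠ lam - n from fun h => hsum₀ (by linarith))]

theorem count_poleLevels_lam_sub_n (hn : 1 ≤ n) : (poleLevels lam n).count (lam - n) = 1 := by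
  have hn' : (1 : ℝ) ≤ n := by exact_mod_cast hn
  have hsum₀ : ∑ l ∈ Finset.Icc 1 (n - 1),
      ((if lam - n = l then 1 else 0) + (if lam - n = lam - l then 2 else 0)) = 0 := by
    refine Finset.sum_eq_zero fun l hl => ?_
    have hsuml := hsum n (Finset.mem_Icc.2 ⟨hn, le_rfl⟩) l hl
    have hl' : (l : ℝ) < n := by
      exact_mod_cast (by have := (Finset.mem_Icc.1 hl).2; omega : l < n)
    rw [if_neg (show lam - n ≠ l from fun h => hsuml (by linarith)), if_neg (by linarith),
      add_zero]
  rw [count_poleLevels, if_neg (by linarith), if_pos rfl, hsum₀]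

theorem count_poleLevels_lam_sub_natCast {l₀ : ℕ} (hl₀ : l₀ ∈ Finset.Icc 1 (n - 1)) :
    (poleLevels lam n).count (lam - l₀) = 2 := by
  obtain ⟨hl₀₁, hl₀₂⟩ := Finset.mem_Icc.1 hl₀
  have hl₀₁' : (1 : ℝ) ≤ l₀ := by exact_mod_cast hl₀₁
  have hn : (l₀ : ℝ) < n := by exact_mod_cast (by omega : l₀ < n)
  have e : ∀ l ∈ Finset.Icc 1 (n - 1),
      ((if lam - l₀ = l then 1 else 0) + (if lam - l₀ = lam - l then 2 else 0)) =
        if l₀ = l then 2 else 0 := fun l hl => by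
    have hsuml := hsum l₀ (Finset.mem_Icc.2 ⟨hl₀₁, by omega⟩) l hl
    rw [if_neg (show lam - l₀ ≠ l from fun h => hsuml (by linarith)), zero_add]
    simp only [sub_right_inj, Nat.cast_inj]
  rw [count_poleLevels, Finset.sum_congr rfl e, Finset.sum_ite_eq, if_pos hl₀,
    if_neg (by linarith), if_neg (by linarith)]

end PoleLevels

theorem natCast_add_ne_of_nodup {lam : ℝ} {n : ℕ}
    (hdist : (([π / 2] ++
        ((List.range n).map fun l => π / 2 - ((l : ℝ) + 1) * π / (2 * lam)) ++
        ((List.range (n - 1)).map fun l => ((l : ℝ) + 1) * π / (2 * lam))) : List ℝ).Nodup) :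
    ∀ l ∈ Finset.Icc 1 n, ∀ l' ∈ Finset.Icc 1 (n - 1), (l : ℝ) + l' ≠ lam := by
  intro l hl l' hl' hsum
  obtain ⟨hl₁, hl₂⟩ := Finset.mem_Icc.1 hl
  obtain ⟨hl'₁, hl'₂⟩ := Finset.mem_Icc.1 hl'
  have hlam : lam ≠ 0 := by rw [← hsum]; positivity
  refine (List.nodup_append.1 hdist).2.2 (π / 2 - l * π / (2 * lam)) ?_ (l' * π / (2 * lam)) ?_ ?_
  · simp only [List.mem_append, List.mem_map, List.mem_range, List.bind_eq_flatMap,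
      List.mem_flatMap, List.mem_pure]
    exact Or.inr ⟨(l - 1 : ℕ), ⟨l - 1, by omega, rfl⟩, by push_cast [Nat.cast_sub hl₁]; ring⟩
  · simp only [List.mem_map, List.mem_range, List.bind_eq_flatMap, List.mem_flatMap,
      List.mem_pure]
    exact ⟨(l' - 1 : ℕ), ⟨l' - 1, by omega, rfl⟩, by push_cast [Nat.cast_sub hl'₁]; ring⟩
  · rw [← hsum]
    field_simp
    ring

/-- For `1 ≤ n < λ`, if the points `π/2`, `π/2 − lπ/(2λ)` (`1 ≤ l ≤ n`), `lπ/(2λ)`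
(`1 ≤ l ≤ n−1`) are pairwise distinct, then in the strip `0 < Re u ≤ π/2` the function
`R_0^{(n)}` has poles exactly at `π/2` (simple), `lπ/(2λ)` for `1 ≤ l ≤ n−1` (simple),
`π/2 − nπ/(2λ)` (simple) and `π/2 − lπ/(2λ)` for `1 ≤ l ≤ n−1` (order two), and has no
zeroes in this strip. -/
theorem stmt16 (lam : ℝ) (n : ℕ) (hn : 1 ≤ n) (hlam : (n : ℝ) < lam)
    (hdist : (([Real.pi / 2] ++
        ((List.range n).map fun l => Real.pi / 2 - ((l : ℝ) + 1) * Real.pi / (2 * lam)) ++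
        ((List.range (n - 1)).map fun l => ((l : ℝ) + 1) * Real.pi / (2 * lam))) :
        List ℝ).Nodup) :
    (∀ u : ℂ, 0 < u.re → u.re ≤ Real.pi / 2 →
        u ≠ ((Real.pi / 2 : ℝ) : ℂ) →
        (∀ l : ℕ, 1 ≤ l → l ≤ n - 1 → u ≠ (((l : ℝ) * Real.pi / (2 * lam) : ℝ) : ℂ)) →
        (∀ l : ℕ, 1 ≤ l → l ≤ n →
          u ≠ ((Real.pi / 2 - (l : ℝ) * Real.pi / (2 * lam) : ℝ) : ℂ)) →
        AnalyticAt ℂ (R0brn lam n) u ∧ R0brn lam n u ≠ 0) ∧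
    HasPoleOfOrder (R0brn lam n) ((Real.pi / 2 : ℝ) : ℂ) 1 ∧
    (∀ l : ℕ, 1 ≤ l → l ≤ n - 1 →
      HasPoleOfOrder (R0brn lam n) (((l : ℝ) * Real.pi / (2 * lam) : ℝ) : ℂ) 1) ∧
    HasPoleOfOrder (R0brn lam n)
      ((Real.pi / 2 - (n : ℝ) * Real.pi / (2 * lam) : ℝ) : ℂ) 1 ∧
    (∀ l : ℕ, 1 ≤ l → l ≤ n - 1 →
      HasPoleOfOrder (R0brn lam n)
        ((Real.pi / 2 - (l : ℝ) * Real.pi / (2 * lam) : ℝ) : ℂ) 2) := by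
  have hlam₀ : 0 < lam := by linarith [(by exact_mod_cast hn : (1 : ℝ) ≤ n)]
  have hsum := natCast_add_ne_of_nodup hdist
  have hhalf : π / 2 = lam * π / (2 * lam) := by field_simp
  have hsub (a : ℝ) : π / 2 - a * π / (2 * lam) = (lam - a) * π / (2 * lam) := by field_simp
  have hl (l : ℕ) (hl₁ : 1 ≤ l) (hl₂ : l ≤ n - 1) : (1 : ℝ) ≤ l ∧ (l : ℝ) < lam :=
    ⟨by exact_mod_cast hl₁, lt_of_le_of_lt (by exact_mod_cast (by omega : l ≤ n)) hlam⟩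
  refine ⟨fun u hu₀ hu₁ h₀ h₁ h₂ => R0brn_analyticAt_and_ne_zero hn hlam ⟨hu₀, hu₁⟩
      (forall_mem_poleLevels hn (hhalf ▸ h₀) h₁ fun l hl₁ hl₂ => hsub l ▸ h₂ l hl₁ hl₂),
    ?_, fun l hl₁ hl₂ => ?_, ?_, fun l hl₁ hl₂ => ?_⟩
  · simpa only [← hhalf, count_poleLevels_lam hn hlam]
      using R0brn_hasPoleOfOrder_count_poleLevels hn hlam hlam₀ le_rfl
  · obtain ⟨hl₁', hl₂'⟩ := hl l hl₁ hl₂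
    simpa only [count_poleLevels_natCast hsum hlam (Finset.mem_Icc.2 ⟨hl₁, hl₂⟩)]
      using R0brn_hasPoleOfOrder_count_poleLevels hn hlam (L := l) (by linarith) hl₂'.le
  · simpa only [hsub, count_poleLevels_lam_sub_n hsum hn]
      using R0brn_hasPoleOfOrder_count_poleLevels hn hlam (L := lam - n) (by linarith)
        (by linarith)
  · obtain ⟨hl₁', hl₂'⟩ := hl l hl₁ hl₂
    simpa only [hsub, count_poleLevels_lam_sub_natCast hsum (Finset.mem_Icc.2 ⟨hl₁, hl₂⟩)]
      using R0brn_hasPoleOfOrder_count_poleLevels hn hlam (L := lam - l) (by linarith)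
        (by linarith)
end

section
/- Let λ > 1 and 0 < ξ < π(λ+1)/2, let n be an integer with 1 ≤ n < λ, and assume the three sets A := {ξ/λ − π/2 + jπ/(2λ) : j = −(n−1), −(n−3), …, n−1}, B := {−ξ/λ + π/2 + jπ/(2λ) : j = −(n−1), −(n−3), …, n−1}, C := {ξ/λ + π/2 + jπ/(2λ) : j = −(n−1), −(n−3), …, n−1} are pairwise disjoint. Then in the strip 0 < Re u < π/2 the meromorphic function R_1^{(n)}(u) has simple poles exactly at the points of A lying in the strip, simple zeroes exactly at the points of B ∪ C lying in the strip, and no other zeroes or poles in the strip. -/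
open Complex Real Filter Topology

/-- The boundary-parameter-dependent factor `R_1^{(n)}(u)` of the ground-state
reflection amplitude of the `n`-th breather: the product over
`l ∈ {(1−n)/2, (3−n)/2, …, (n−1)/2}` (here `l = (2t+1−n)/2`, `t = 0, …, n−1`) of
`(ξ/(λπ) − 1/2 + l/λ)_u / (ξ/(λπ) + 1/2 + l/λ)_u`. -/
noncomputable def R1brn (lam ξ : ℝ) (n : ℕ) (u : ℂ) : ℂ :=
  ∏ t ∈ Finset.range n,
    blk (ξ / (lam * Real.pi) - 1 / 2 + (2 * (t : ℝ) + 1 - (n : ℝ)) / (2 * lam)) u /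
    blk (ξ / (lam * Real.pi) + 1 / 2 + (2 * (t : ℝ) + 1 - (n : ℝ)) / (2 * lam)) u

/-- The pole set `A = {ξ/λ − π/2 + jπ/(2λ)}` with `j` running over
`−(n−1), −(n−3), …, n−1`. -/
def setA (lam ξ : ℝ) (n : ℕ) : Set ℝ :=
  {x : ℝ | ∃ j : ℤ, |j| ≤ (n : ℤ) - 1 ∧ j ≡ (n : ℤ) - 1 [ZMOD 2] ∧
    x = ξ / lam - Real.pi / 2 + (j : ℝ) * Real.pi / (2 * lam)}

/-- The zero set `B = {−ξ/λ + π/2 + jπ/(2λ)}`, `j = −(n−1), −(n−3), …, n−1`. -/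
def setB (lam ξ : ℝ) (n : ℕ) : Set ℝ :=
  {x : ℝ | ∃ j : ℤ, |j| ≤ (n : ℤ) - 1 ∧ j ≡ (n : ℤ) - 1 [ZMOD 2] ∧
    x = -(ξ / lam) + Real.pi / 2 + (j : ℝ) * Real.pi / (2 * lam)}

/-- The zero set `C = {ξ/λ + π/2 + jπ/(2λ)}`, `j = −(n−1), −(n−3), …, n−1`. -/
def setC (lam ξ : ℝ) (n : ℕ) : Set ℝ :=
  {x : ℝ | ∃ j : ℤ, |j| ≤ (n : ℤ) - 1 ∧ j ≡ (n : ℤ) - 1 [ZMOD 2] ∧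
    x = ξ / lam + Real.pi / 2 + (j : ℝ) * Real.pi / (2 * lam)}

/-- `f` has a zero of order `m` at `p`. -/
def HasZeroOfOrder (f : ℂ → ℂ) (p : ℂ) (m : ℕ) : Prop :=
  ∃ h : ℂ → ℂ, AnalyticAt ℂ h p ∧ h p ≠ 0 ∧
    ∀ᶠ u in 𝓝 p, f u = (u - p) ^ m * h u

/-! Since `(y)_u = sin((u + πy)/2) / sin((u − πy)/2)`, `R_1^{(n)}` is a quotient `N / D` of
entire functions, each a product of shifted half-angle sines `sin((u − c)/2)` whose centres
are `±a_t` and `±(a_t + π)`, with `a_t` running over `A`. All centres lie in `(−3π/2, 2π)`, so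
each such sine vanishes in the strip at most at its centre, and there simply. Hence in the
strip `D` vanishes exactly on `A` and `N` exactly on `B ∪ C = (−A) ∪ (A + π)`; injectivity of
`t ↦ a_t` and the disjointness of `A`, `B`, `C` make every such point the zero of exactly one
factor of `N` or `D`, so it is a simple zero or a simple pole of `N / D`. -/

section HasZeroOfOrder

variable {f g : ℂ → ℂ} {p : ℂ} {m : ℕ}

lemma hasZeroOfOrder_one_of_deriv_ne_zero (hf : AnalyticAt ℂ f p) (h0 : f p = 0)
    (h1 : deriv f p ≠ 0) : HasZeroOfOrder f p 1 := by
  have hord := hf.analyticOrderAt_sub_eq_one_of_deriv_ne_zero h1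
  simp only [h0, sub_zero] at hord
  obtain ⟨h, hh, hh0, hfh⟩ := hf.analyticOrderAt_eq_natCast.1 (by exact_mod_cast hord)
  exact ⟨h, hh, hh0, by simpa only [pow_one, smul_eq_mul] using hfh⟩

lemma HasZeroOfOrder.mul_right (hf : HasZeroOfOrder f p m) (hg : AnalyticAt ℂ g p)
    (hg0 : g p ≠ 0) : HasZeroOfOrder (fun u ↦ f u * g u) p m := by
  obtain ⟨h, hh, hh0, hfh⟩ := hf
  exact ⟨fun u ↦ h u * g u, hh.mul hg, mul_ne_zero hh0 hg0,
    hfh.mono fun u hu ↦ by simp only [hu, mul_assoc]⟩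

lemma HasZeroOfOrder.mul_left (hg : HasZeroOfOrder g p m) (hf : AnalyticAt ℂ f p)
    (hf0 : f p ≠ 0) : HasZeroOfOrder (fun u ↦ f u * g u) p m := by
  simpa only [mul_comm] using hg.mul_right hf hf0

lemma HasZeroOfOrder.div (hf : HasZeroOfOrder f p m) (hg : AnalyticAt ℂ g p)
    (hg0 : g p ≠ 0) : HasZeroOfOrder (fun u ↦ f u / g u) p m := by
  simpa only [div_eq_mul_inv] using
    hf.mul_right (g := fun u ↦ (g u)⁻¹) (hg.inv hg0) (inv_ne_zero hg0)

lemma HasZeroOfOrder.finset_prod {ι : Type*} [DecidableEq ι] {s : Finset ι}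
    {F : ι → ℂ → ℂ} {i : ι} (hi : i ∈ s) (hF : HasZeroOfOrder (F i) p m)
    (hs : ∀ j ∈ s.erase i, AnalyticAt ℂ (F j) p ∧ F j p ≠ 0) :
    HasZeroOfOrder (fun u ↦ ∏ j ∈ s, F j u) p m := by
  simp_rw [← Finset.mul_prod_erase s _ hi]
  exact hF.mul_right (Finset.analyticAt_fun_prod _ fun j hj ↦ (hs j hj).1)
    (Finset.prod_ne_zero_iff.2 fun j hj ↦ (hs j hj).2)

lemma hasPoleOfOrder_div_of_hasZeroOfOrder (hf : AnalyticAt ℂ f p) (hf0 : f p ≠ 0)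
    (hg : HasZeroOfOrder g p m) : HasPoleOfOrder (fun u ↦ f u / g u) p m := by
  obtain ⟨h, hh, hh0, hgh⟩ := hg
  refine ⟨fun u ↦ f u / h u, hf.div hh hh0, div_ne_zero hf0 hh0, ?_⟩
  filter_upwards [nhdsWithin_le_nhds hgh] with u hu
  rw [hu, div_mul_eq_div_div_swap]

end HasZeroOfOrder

noncomputable def halfSin (c : ℝ) (u : ℂ) : ℂ := Complex.sin ((u - c) / 2)

lemma differentiable_halfSin (c : ℝ) : Differentiable ℂ (halfSin c) :=
  Complex.differentiable_sin.comp ((differentiable_id.sub_const _).div_const _)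

lemma analyticAt_halfSin_mul_halfSin (c d : ℝ) (u : ℂ) :
    AnalyticAt ℂ (fun z ↦ halfSin c z * halfSin d z) u :=
  ((differentiable_halfSin c).mul (differentiable_halfSin d)).analyticAt u

lemma hasZeroOfOrder_halfSin (c : ℝ) : HasZeroOfOrder (halfSin c) c 1 := by
  have hderiv : HasDerivAt (halfSin c) (Complex.cos ((c - c) / 2) * (1 / 2)) c :=
    (Complex.hasDerivAt_sin _).comp _ (((hasDerivAt_id _).sub_const _).div_const 2)
  refine hasZeroOfOrder_one_of_deriv_ne_zero ((differentiable_halfSin c).analyticAt _)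
    (by simp [halfSin]) ?_
  rw [hderiv.deriv]
  norm_num

lemma halfSin_ne_zero {c : ℝ} {u : ℂ} (hc0 : -(3 * π / 2) < c) (hc1 : c < 2 * π)
    (hu0 : 0 < u.re) (hu1 : u.re < π / 2) (hne : u ≠ c) : halfSin c u ≠ 0 := by
  rw [halfSin, Ne, Complex.sin_eq_zero_iff]
  rintro ⟨k, hk⟩
  have hu : u = c + 2 * π * k := by linear_combination 2 * hk
  have hre : u.re = c + 2 * π * k := by simpa using congrArg Complex.re hu
  have hk0 : k = 0 := by
    have hlo : (-1 : ℝ) < k := by nlinarith [Real.pi_pos]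
    have hhi : (k : ℝ) < 1 := by nlinarith [Real.pi_pos]
    have : (-1 : ℤ) < k ∧ k < 1 := ⟨by exact_mod_cast hlo, by exact_mod_cast hhi⟩
    omega
  exact hne (by simpa [hk0] using hu)

lemma exists_index_iff {n : ℕ} {P : ℤ → Prop} :
    (∃ j : ℤ, |j| ≤ (n : ℤ) - 1 ∧ j ≡ (n : ℤ) - 1 [ZMOD 2] ∧ P j) ↔
      ∃ t < n, P (2 * t + 1 - n) := by
  constructor
  · rintro ⟨j, hj, hpar, hP⟩
    rw [abs_le] at hj
    rw [Int.ModEq] at hpar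
    have hjt : 2 * (((j + n - 1) / 2).toNat : ℤ) + 1 - n = j := by omega
    exact ⟨((j + n - 1) / 2).toNat, by omega, by rwa [hjt]⟩
  · rintro ⟨t, ht, hP⟩
    exact ⟨_, by rw [abs_le]; omega, by rw [Int.ModEq]; omega, hP⟩

lemma exists_index_iff_neg {n : ℕ} {P : ℤ → Prop} :
    (∃ j : ℤ, |j| ≤ (n : ℤ) - 1 ∧ j ≡ (n : ℤ) - 1 [ZMOD 2] ∧ P j) ↔
      ∃ t < n, P (-(2 * t + 1 - n)) := by
  rw [← exists_index_iff (P := fun j ↦ P (-j))]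
  constructor <;> rintro ⟨j, hj, hpar, hP⟩ <;> rw [Int.ModEq] at hpar <;>
    exact ⟨-j, by rwa [abs_neg], by rw [Int.ModEq]; omega, by simpa using hP⟩

noncomputable def ptA (lam ξ : ℝ) (n t : ℕ) : ℝ :=
  ξ / lam - π / 2 + (2 * t + 1 - n) * π / (2 * lam)

section R1

variable {lam ξ : ℝ} {n : ℕ}

lemma mem_setA_iff {x : ℝ} : x ∈ setA lam ξ n ↔ ∃ t < n, x = ptA lam ξ n t := by
  simp only [setA, Set.mem_ofPred_eq, exists_index_iff, ptA]
  push_cast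
  rfl

lemma mem_setB_iff {x : ℝ} : x ∈ setB lam ξ n ↔ ∃ t < n, x = -ptA lam ξ n t := by
  simp only [setB, Set.mem_ofPred_eq, exists_index_iff_neg, ptA]
  push_cast
  refine exists_congr fun t ↦ and_congr_right fun _ ↦ ?_
  ring_nf

lemma mem_setC_iff {x : ℝ} : x ∈ setC lam ξ n ↔ ∃ t < n, x = ptA lam ξ n t + π := by
  simp only [setC, Set.mem_ofPred_eq, exists_index_iff, ptA]
  push_cast
  refine exists_congr fun t ↦ and_congr_right fun _ ↦ ?_
  ring_nf

lemma ptA_injective (hlam : lam ≠ 0) : Function.Injective (ptA lam ξ n) := by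
  intro t t' h
  simp only [ptA] at h
  field_simp at h
  exact_mod_cast (by nlinarith [Real.pi_pos] : (t : ℝ) = t')

lemma ptA_mem_Ioo (hξ0 : 0 < ξ) (hξ1 : ξ < π * (lam + 1) / 2) (hn : (n : ℝ) < lam) {t : ℕ}
    (ht : t < n) : ptA lam ξ n t ∈ Set.Ioo (-π) (π / 2) := by
  have hlam : 0 < lam := (Nat.cast_nonneg n).trans_lt hn
  have hw : 0 < π / (2 * lam) := by positivity
  have hξ : ξ / lam < π / 2 + π / (2 * lam) := by
    rw [div_lt_iff₀ hlam]
    calc ξ < π * (lam + 1) / 2 := hξ1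
      _ = (π / 2 + π / (2 * lam)) * lam := by field_simp
  have hnw : n * (π / (2 * lam)) < π / 2 := by
    rw [mul_div_assoc', div_lt_div_iff₀ (by positivity) two_pos]
    nlinarith [Real.pi_pos]
  have ht' : (t : ℝ) + 1 ≤ n := by exact_mod_cast ht
  have hj : |(2 * t + 1 - n : ℝ) * (π / (2 * lam))| ≤ (n - 1) * (π / (2 * lam)) := by
    rw [abs_mul, abs_of_pos hw]
    gcongr
    rw [abs_le]
    constructor <;> linarith [(Nat.cast_nonneg t : (0 : ℝ) ≤ t)]
  rw [abs_le] at hj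
  rw [ptA, mul_div_assoc]
  constructor <;> linarith [div_pos hξ0 hlam]

noncomputable def R1num (lam ξ : ℝ) (n : ℕ) (u : ℂ) : ℂ :=
  ∏ t ∈ Finset.range n, halfSin (-ptA lam ξ n t) u * halfSin (ptA lam ξ n t + π) u

noncomputable def R1den (lam ξ : ℝ) (n : ℕ) (u : ℂ) : ℂ :=
  ∏ t ∈ Finset.range n, halfSin (ptA lam ξ n t) u * halfSin (-(ptA lam ξ n t + π)) u

lemma blk_eq (y : ℝ) (u : ℂ) : blk y u = halfSin (-(π * y)) u / halfSin (π * y) u := by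
  simp only [blk, halfSin, ofReal_neg, sub_neg_eq_add]

lemma R1brn_eq_div (u : ℂ) : R1brn lam ξ n u = R1num lam ξ n u / R1den lam ξ n u := by
  have hA (t : ℕ) :
      π * (ξ / (lam * π) - 1 / 2 + (2 * t + 1 - n) / (2 * lam)) = ptA lam ξ n t := by
    rw [ptA]; field_simp
  have hC (t : ℕ) :
      π * (ξ / (lam * π) + 1 / 2 + (2 * t + 1 - n) / (2 * lam)) = ptA lam ξ n t + π := by
    rw [ptA]; field_simp; ring
  simp only [R1brn, R1num, R1den, ← Finset.prod_div_distrib, blk_eq, hA, hC, div_div_div_eq]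

lemma analyticAt_R1num (u : ℂ) : AnalyticAt ℂ (R1num lam ξ n) u :=
  Finset.analyticAt_fun_prod _ fun _ _ ↦ analyticAt_halfSin_mul_halfSin _ _ u

lemma analyticAt_R1den (u : ℂ) : AnalyticAt ℂ (R1den lam ξ n) u :=
  Finset.analyticAt_fun_prod _ fun _ _ ↦ analyticAt_halfSin_mul_halfSin _ _ u

section Strip

variable {u : ℂ} {t : ℕ}

lemma halfSin_ptA_ne_zero (hu0 : 0 < u.re) (hu1 : u.re < π / 2)
    (hA : ptA lam ξ n t ∈ Set.Ioo (-π) (π / 2)) (hu : u ≠ ↑(ptA lam ξ n t)) :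
    halfSin (ptA lam ξ n t) u ≠ 0 :=
  halfSin_ne_zero (by linarith [hA.1]) (by linarith [hA.2]) hu0 hu1 hu

lemma halfSin_neg_ptA_ne_zero (hu0 : 0 < u.re) (hu1 : u.re < π / 2)
    (hA : ptA lam ξ n t ∈ Set.Ioo (-π) (π / 2)) (hu : u ≠ ↑(-ptA lam ξ n t)) :
    halfSin (-ptA lam ξ n t) u ≠ 0 :=
  halfSin_ne_zero (by linarith [hA.2]) (by linarith [hA.1]) hu0 hu1 hu

lemma halfSin_ptA_add_pi_ne_zero (hu0 : 0 < u.re) (hu1 : u.re < π / 2)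
    (hA : ptA lam ξ n t ∈ Set.Ioo (-π) (π / 2)) (hu : u ≠ ↑(ptA lam ξ n t + π)) :
    halfSin (ptA lam ξ n t + π) u ≠ 0 :=
  halfSin_ne_zero (by linarith [hA.1]) (by linarith [hA.2]) hu0 hu1 hu

lemma halfSin_neg_ptA_add_pi_ne_zero (hu0 : 0 < u.re) (hu1 : u.re < π / 2)
    (hA : ptA lam ξ n t ∈ Set.Ioo (-π) (π / 2)) : halfSin (-(ptA lam ξ n t + π)) u ≠ 0 := by
  refine halfSin_ne_zero (by linarith [hA.2]) (by linarith [hA.1]) hu0 hu1 fun h ↦ ?_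
  have := congrArg Complex.re h
  simp only [ofReal_re] at this
  linarith [hA.1]

end Strip

lemma R1num_ne_zero (hA : ∀ t < n, ptA lam ξ n t ∈ Set.Ioo (-π) (π / 2)) {u : ℂ}
    (hu0 : 0 < u.re) (hu1 : u.re < π / 2)
    (hu : ∀ b ∈ setB lam ξ n ∪ setC lam ξ n, u ≠ (b : ℂ)) : R1num lam ξ n u ≠ 0 := by
  refine Finset.prod_ne_zero_iff.2 fun t ht ↦ ?_
  rw [Finset.mem_range] at ht
  exact mul_ne_zero
    (halfSin_neg_ptA_ne_zero hu0 hu1 (hA t ht) (hu _ (.inl (mem_setB_iff.2 ⟨t, ht, rfl⟩))))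
    (halfSin_ptA_add_pi_ne_zero hu0 hu1 (hA t ht) (hu _ (.inr (mem_setC_iff.2 ⟨t, ht, rfl⟩))))

lemma R1den_ne_zero (hA : ∀ t < n, ptA lam ξ n t ∈ Set.Ioo (-π) (π / 2)) {u : ℂ}
    (hu0 : 0 < u.re) (hu1 : u.re < π / 2)
    (hu : ∀ a ∈ setA lam ξ n, u ≠ (a : ℂ)) : R1den lam ξ n u ≠ 0 := by
  refine Finset.prod_ne_zero_iff.2 fun t ht ↦ ?_
  rw [Finset.mem_range] at ht
  exact mul_ne_zero
    (halfSin_ptA_ne_zero hu0 hu1 (hA t ht) (hu _ (mem_setA_iff.2 ⟨t, ht, rfl⟩)))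
    (halfSin_neg_ptA_add_pi_ne_zero hu0 hu1 (hA t ht))

lemma R1den_hasZeroOfOrder (hA : ∀ t < n, ptA lam ξ n t ∈ Set.Ioo (-π) (π / 2))
    (hlam : lam ≠ 0) {t₀ : ℕ} (ht₀ : t₀ < n) (h0 : 0 < ptA lam ξ n t₀) :
    HasZeroOfOrder (R1den lam ξ n) (ptA lam ξ n t₀) 1 := by
  have hu0 : 0 < (ptA lam ξ n t₀ : ℂ).re := by rwa [ofReal_re]
  have hu1 : (ptA lam ξ n t₀ : ℂ).re < π / 2 := by rw [ofReal_re]; exact (hA t₀ ht₀).2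
  refine HasZeroOfOrder.finset_prod (Finset.mem_range.2 ht₀)
    ((hasZeroOfOrder_halfSin _).mul_right ((differentiable_halfSin _).analyticAt _)
      (halfSin_neg_ptA_add_pi_ne_zero hu0 hu1 (hA t₀ ht₀)))
    fun t ht ↦ ⟨analyticAt_halfSin_mul_halfSin _ _ _, ?_⟩
  obtain ⟨htt₀, ht⟩ := Finset.mem_erase.1 ht
  rw [Finset.mem_range] at ht
  exact mul_ne_zero (halfSin_ptA_ne_zero hu0 hu1 (hA t ht)
      fun h ↦ htt₀ (ptA_injective hlam (ofReal_injective h)).symm)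
    (halfSin_neg_ptA_add_pi_ne_zero hu0 hu1 (hA t ht))

lemma R1num_hasZeroOfOrder (hA : ∀ t < n, ptA lam ξ n t ∈ Set.Ioo (-π) (π / 2))
    (hlam : lam ≠ 0) (hBC : Disjoint (setB lam ξ n) (setC lam ξ n)) {b : ℝ}
    (hb : b ∈ setB lam ξ n ∪ setC lam ξ n) (hb0 : 0 < b) (hb1 : b < π / 2) :
    HasZeroOfOrder (R1num lam ξ n) b 1 := by
  have hu0 : 0 < (b : ℂ).re := by rwa [ofReal_re]
  have hu1 : (b : ℂ).re < π / 2 := by rwa [ofReal_re]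
  have hBC' {t t' : ℕ} (ht : t < n) (ht' : t' < n) :
      (↑(-ptA lam ξ n t) : ℂ) ≠ ↑(ptA lam ξ n t' + π) :=
    ofReal_injective.ne
      (hBC.ne_of_mem (mem_setB_iff.2 ⟨t, ht, rfl⟩) (mem_setC_iff.2 ⟨t', ht', rfl⟩))
  rcases hb with hB | hC
  · obtain ⟨t₀, ht₀, rfl⟩ := mem_setB_iff.1 hB
    refine HasZeroOfOrder.finset_prod (Finset.mem_range.2 ht₀)
      ((hasZeroOfOrder_halfSin _).mul_right ((differentiable_halfSin _).analyticAt _)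
        (halfSin_ptA_add_pi_ne_zero hu0 hu1 (hA t₀ ht₀) (hBC' ht₀ ht₀)))
      fun t ht ↦ ⟨analyticAt_halfSin_mul_halfSin _ _ _, ?_⟩
    obtain ⟨htt₀, ht⟩ := Finset.mem_erase.1 ht
    rw [Finset.mem_range] at ht
    refine mul_ne_zero (halfSin_neg_ptA_ne_zero hu0 hu1 (hA t ht) fun h ↦ htt₀ ?_)
      (halfSin_ptA_add_pi_ne_zero hu0 hu1 (hA t ht) (hBC' ht₀ ht))
    exact (ptA_injective hlam (neg_injective (ofReal_injective h))).symm
  · obtain ⟨t₀, ht₀, rfl⟩ := mem_setC_iff.1 hC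
    refine HasZeroOfOrder.finset_prod (Finset.mem_range.2 ht₀)
      ((hasZeroOfOrder_halfSin _).mul_left ((differentiable_halfSin _).analyticAt _)
        (halfSin_neg_ptA_ne_zero hu0 hu1 (hA t₀ ht₀) (hBC' ht₀ ht₀).symm))
      fun t ht ↦ ⟨analyticAt_halfSin_mul_halfSin _ _ _, ?_⟩
    obtain ⟨htt₀, ht⟩ := Finset.mem_erase.1 ht
    rw [Finset.mem_range] at ht
    refine mul_ne_zero (halfSin_neg_ptA_ne_zero hu0 hu1 (hA t ht) (hBC' ht ht₀).symm)
      (halfSin_ptA_add_pi_ne_zero hu0 hu1 (hA t ht) fun h ↦ htt₀ ?_)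
    exact (ptA_injective hlam (add_right_cancel (ofReal_injective h))).symm

end R1

theorem stmt17_general (lam ξ : ℝ) (hxi0 : 0 < ξ)
    (hxi1 : ξ < Real.pi * (lam + 1) / 2) (n : ℕ) (hn2 : (n : ℝ) < lam)
    (hAB : Disjoint (setA lam ξ n) (setB lam ξ n))
    (hAC : Disjoint (setA lam ξ n) (setC lam ξ n))
    (hBC : Disjoint (setB lam ξ n) (setC lam ξ n)) :
    (∀ u : ℂ, 0 < u.re → u.re < Real.pi / 2 →
        (∀ a ∈ setA lam ξ n, u ≠ (a : ℂ)) →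
        AnalyticAt ℂ (R1brn lam ξ n) u) ∧
    (∀ a ∈ setA lam ξ n, 0 < a → a < Real.pi / 2 →
        HasPoleOfOrder (R1brn lam ξ n) ((a : ℝ) : ℂ) 1) ∧
    (∀ b ∈ setB lam ξ n ∪ setC lam ξ n, 0 < b → b < Real.pi / 2 →
        HasZeroOfOrder (R1brn lam ξ n) ((b : ℝ) : ℂ) 1) ∧
    (∀ u : ℂ, 0 < u.re → u.re < Real.pi / 2 →
        (∀ a ∈ setA lam ξ n, u ≠ (a : ℂ)) →
        (∀ b ∈ setB lam ξ n ∪ setC lam ξ n, u ≠ (b : ℂ)) →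
        R1brn lam ξ n u ≠ 0) := by
  have hlam : lam ≠ 0 := ((Nat.cast_nonneg n).trans_lt hn2).ne'
  have hA (t : ℕ) (ht : t < n) := ptA_mem_Ioo hxi0 hxi1 hn2 ht
  have hABC : Disjoint (setA lam ξ n) (setB lam ξ n ∪ setC lam ξ n) := hAB.union_right hAC
  have hR : R1brn lam ξ n = fun u ↦ R1num lam ξ n u / R1den lam ξ n u := funext R1brn_eq_div
  rw [hR]
  refine ⟨fun u hu0 hu1 hu ↦ ?_, fun a ha ha0 _ ↦ ?_, fun b hb hb0 hb1 ↦ ?_,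
    fun u hu0 hu1 huA huBC ↦ ?_⟩
  · exact (analyticAt_R1num u).div (analyticAt_R1den u) (R1den_ne_zero hA hu0 hu1 hu)
  · obtain ⟨t, ht, rfl⟩ := mem_setA_iff.1 ha
    refine hasPoleOfOrder_div_of_hasZeroOfOrder (analyticAt_R1num _) ?_
      (R1den_hasZeroOfOrder hA hlam ht ha0)
    exact R1num_ne_zero hA (by rwa [ofReal_re]) (by rwa [ofReal_re])
      fun b hb ↦ ofReal_injective.ne (hABC.ne_of_mem ha hb)
  · refine (R1num_hasZeroOfOrder hA hlam hBC hb hb0 hb1).div (analyticAt_R1den _) ?_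
    exact R1den_ne_zero hA (by rwa [ofReal_re]) (by rwa [ofReal_re])
      fun a ha ↦ ofReal_injective.ne (hABC.ne_of_mem ha hb).symm
  · exact div_ne_zero (R1num_ne_zero hA hu0 hu1 huBC) (R1den_ne_zero hA hu0 hu1 huA)

/-- For `λ > 1`, `0 < ξ < π(λ+1)/2`, `1 ≤ n < λ`, and `A`, `B`, `C` pairwise disjoint,
in the strip `0 < Re u < π/2` the function `R_1^{(n)}` has simple poles exactly at the
points of `A` in the strip, simple zeroes exactly at the points of `B ∪ C` in the strip,
and no other zeroes or poles in the strip. -/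
theorem stmt17 (lam ξ : ℝ) (hlam : 1 < lam) (hxi0 : 0 < ξ)
    (hxi1 : ξ < Real.pi * (lam + 1) / 2) (n : ℕ) (hn1 : 1 ≤ n) (hn2 : (n : ℝ) < lam)
    (hAB : Disjoint (setA lam ξ n) (setB lam ξ n))
    (hAC : Disjoint (setA lam ξ n) (setC lam ξ n))
    (hBC : Disjoint (setB lam ξ n) (setC lam ξ n)) :
    (∀ u : ℂ, 0 < u.re → u.re < Real.pi / 2 →
        (∀ a ∈ setA lam ξ n, u ≠ (a : ℂ)) →
        AnalyticAt ℂ (R1brn lam ξ n) u) ∧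
    (∀ a ∈ setA lam ξ n, 0 < a → a < Real.pi / 2 →
        HasPoleOfOrder (R1brn lam ξ n) ((a : ℝ) : ℂ) 1) ∧
    (∀ b ∈ setB lam ξ n ∪ setC lam ξ n, 0 < b → b < Real.pi / 2 →
        HasZeroOfOrder (R1brn lam ξ n) ((b : ℝ) : ℂ) 1) ∧
    (∀ u : ℂ, 0 < u.re → u.re < Real.pi / 2 →
        (∀ a ∈ setA lam ξ n, u ≠ (a : ℂ)) →
        (∀ b ∈ setB lam ξ n ∪ setC lam ξ n, u ≠ (b : ℂ)) →
        R1brn lam ξ n u ≠ 0) :=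
  stmt17_general lam ξ hxi0 hxi1 n hn2 hAB hAC hBC
end
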